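/- arXiv:0704.3783 — 9 statements merged into one kernel-verified Lean document; each statement's English description precedes it below -/
import Mathlib

section
/- A positive rational number α is the area of a right triangle with positive rational sides if and only if there exists a rational number d such that d - α, d, and d + α are all squares of rational numbers. -/
/-- A positive rational `α` is the area of a right triangle with positive rational sides iff
there is a rational `d` such that `d - α`, `d`, `d + α` are all squares of rationals. -/
theorem congruent_iff_three_squares (α : ℚ) (hα : 0 < α) :
    (∃ a b c : ℚ, 0 < a ∧ 0 < b ∧ 0 < c ∧ a ^ 2 + b ^ 2 = c ^ 2 ∧ a * b = 2 * α) ↔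
    (∃ d : ℚ, (∃ q : ℚ, d - α = q ^ 2) ∧ (∃ q : ℚ, d = q ^ 2) ∧
      (∃ q : ℚ, d + α = q ^ 2)) := by
  constructor
  · rintro ⟨a, b, c, ha, hb, hc, hpy, har⟩
    exact ⟨(c / 2) ^ 2, ⟨(a - b) / 2, by linarith [sq_nonneg (a-b)]; ⟩, ⟨c / 2, rfl⟩,
      ⟨(a + b) / 2, by ring_nf; nlinarith [hpy, har]⟩⟩
  · rintro ⟨d, ⟨r, hr⟩, ⟨q, hq⟩, ⟨s, hs⟩⟩
    have hsr : r ^ 2 < s ^ 2 := by nlinarith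
    have habs : |r| < |s| := by
      rw [← sq_abs r, ← sq_abs s] at hsr
      exact (pow_lt_pow_iff_left₀ (abs_nonneg r) (abs_nonneg s) (by norm_num)).mp hsr
    have hq0 : q ≠ 0 := by
      intro h; rw [h] at hq; nlinarith [sq_nonneg r]
    refine ⟨|s| + |r|, |s| - |r|, 2 * |q|, ?_, ?_, ?_, ?_, ?_⟩
    · have := abs_nonneg r; linarith [lt_of_le_of_lt this habs]
    · linarith
    · positivity
    · have h1 : |s| ^ 2 = s ^ 2 := sq_abs s
      have h2 : |r| ^ 2 = r ^ 2 := sq_abs r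
      have h3 : |q| ^ 2 = q ^ 2 := sq_abs q
      nlinarith [h1, h2, h3]
    · have h1 : |s| ^ 2 = s ^ 2 := sq_abs s
      have h2 : |r| ^ 2 = r ^ 2 := sq_abs r
      nlinarith [h1, h2]
end

section
/- There is no right triangle with positive rational sides whose area is the square of a rational number. In particular, 1 is not a congruent number. -/
/-!
Fermat's infinite descent. Rescaling a rational right triangle with square area gives an integer
one with coprime legs `a = m ^ 2 - n ^ 2` (odd) and `b = 2 * m * n`. Its area
`m * n * (m - n) * (m + n)` is a square with pairwise coprime positive factors, so
`m = u ^ 2`, `n = v ^ 2`, `m - n = s ^ 2` and `m + n = t ^ 2`. The legs `(t + s) / 2` and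
`(t - s) / 2` then form a primitive triangle with hypotenuse `u` and area `n / 4 = (v / 2) ^ 2`,
strictly smaller than the area we started with.
-/

structure PrimitiveSquareAreaTriangle (a b c r : ℤ) : Prop where
  a_pos : 0 < a
  b_pos : 0 < b
  coprime : IsCoprime a b
  pythagorean : a ^ 2 + b ^ 2 = c ^ 2
  area : a * b = 2 * r ^ 2

theorem IsCoprime.of_add_sub {R : Type*} [CommRing R] {x y : R}
    (h : IsCoprime (x + y) (x - y)) : IsCoprime x y := by
  obtain ⟨p, q, hpq⟩ := h
  exact ⟨p + q, p - q, by linear_combination hpq⟩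

theorem Int.odd_or_odd_of_isCoprime {a b : ℤ} (h : IsCoprime a b) : Odd a ∨ Odd b := by
  by_contra! hab
  simp only [Int.not_odd_iff_even, even_iff_two_dvd] at hab
  exact absurd (Int.isUnit_iff.mp (h.isUnit_of_dvd' hab.1 hab.2)) (by norm_num)

theorem Int.exists_pos_sq_of_isCoprime {x y r : ℤ} (hx : 0 < x) (h : IsCoprime x y)
    (hxy : x * y = r ^ 2) : ∃ u, 0 < u ∧ x = u ^ 2 := by
  obtain ⟨u, hu | hu⟩ := Int.sq_of_isCoprime h hxy
  · exact ⟨|u|, abs_pos.mpr (by rintro rfl; simp_all), by rw [sq_abs, hu]⟩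
  · nlinarith [sq_nonneg u]

theorem Rat.exists_pos_mul_eq_coprime {a b : ℚ} (ha : 0 < a) :
    ∃ k : ℚ, 0 < k ∧ ∃ A B : ℤ, IsCoprime A B ∧ k * a = A ∧ k * b = B := by
  refine ⟨(b / a).den / a, by positivity, (b / a).den, (b / a).num, ?_, ?_, ?_⟩
  · rw [Int.isCoprime_iff_gcd_eq_one, Int.gcd_comm]
    exact (b / a).reduced
  · rw [div_mul_cancel₀ _ ha.ne']; norm_cast
  · rw [← Rat.mul_den_eq_num]; field_simp

theorem Int.exists_sq_of_mul_mul_sub_mul_add_eq_sq {m n r : ℤ} (hn : 0 < n) (hnm : n < m)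
    (hmn : IsCoprime m n) (hcop : IsCoprime ((m - n) * (m + n)) (2 * m * n))
    (h : m * n * ((m - n) * (m + n)) = r ^ 2) :
    ∃ u v s t, m = u ^ 2 ∧ n = v ^ 2 ∧ m - n = s ^ 2 ∧ m + n = t ^ 2 ∧ 0 < s ∧ 0 < t ∧
      IsCoprime s t := by
  have hs : IsCoprime (m - n) (2 * m * n) := hcop.of_mul_left_left
  have ht : IsCoprime (m + n) (2 * m * n) := hcop.of_mul_left_right
  have hsm : IsCoprime (m - n) m := hs.of_mul_right_left.of_mul_right_right
  have hsn : IsCoprime (m - n) n := hs.of_mul_right_right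
  have htm : IsCoprime (m + n) m := ht.of_mul_right_left.of_mul_right_right
  have htn : IsCoprime (m + n) n := ht.of_mul_right_right
  -- `m - n` is odd and prime to `n`, hence to `(m + n) - (m - n) = 2 * n`
  have hst : IsCoprime (m - n) (m + n) := by
    have := (hs.of_mul_right_left.of_mul_right_left.mul_right hsn).mul_add_left_right 1
    rwa [show (m - n) * 1 + 2 * n = m + n by ring] at this
  obtain ⟨u, -, hu⟩ := Int.exists_pos_sq_of_isCoprime (by omega)
    (hmn.mul_right (hsm.symm.mul_right htm.symm))
    (by linear_combination h : m * (n * ((m - n) * (m + n))) = r ^ 2)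
  obtain ⟨v, -, hv⟩ := Int.exists_pos_sq_of_isCoprime hn
    (hmn.symm.mul_right (hsn.symm.mul_right htn.symm))
    (by linear_combination h : n * (m * ((m - n) * (m + n))) = r ^ 2)
  obtain ⟨s, hs₀, hs⟩ := Int.exists_pos_sq_of_isCoprime (by omega)
    (hsm.mul_right (hsn.mul_right hst))
    (by linear_combination h : (m - n) * (m * (n * (m + n))) = r ^ 2)
  obtain ⟨t, ht₀, ht⟩ := Int.exists_pos_sq_of_isCoprime (by omega)
    (htm.mul_right (htn.mul_right hst.symm))
    (by linear_combination h : (m + n) * (m * (n * (m - n))) = r ^ 2)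
  refine ⟨u, v, s, t, hu, hv, hs, ht, hs₀, ht₀, ?_⟩
  rw [hs, ht] at hst
  exact (IsCoprime.pow_iff two_pos two_pos).mp hst

namespace PrimitiveSquareAreaTriangle

variable {a b c r : ℤ}

theorem symm (h : PrimitiveSquareAreaTriangle a b c r) :
    PrimitiveSquareAreaTriangle b a c r where
  a_pos := h.b_pos
  b_pos := h.a_pos
  coprime := h.coprime.symm
  pythagorean := by linear_combination h.pythagorean
  area := by linear_combination h.area

theorem exists_of_half_sum_half_sub {s t u v : ℤ} (hs : Odd s) (ht : Odd t) (hs₀ : 0 < s)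
    (hst : s < t) (hcop : IsCoprime s t) (hu : s ^ 2 + t ^ 2 = 2 * u ^ 2)
    (hv : t ^ 2 - s ^ 2 = 2 * v ^ 2) :
    ∃ A B w, PrimitiveSquareAreaTriangle A B u w ∧ 2 * (A * B) = v ^ 2 := by
  obtain ⟨k, rfl⟩ := hs
  obtain ⟨l, rfl⟩ := ht
  have hv₂ : v ^ 2 = 2 * ((l + k + 1) * (l - k)) := by linarith
  obtain ⟨w, rfl⟩ : Even v := by
    rw [← Int.even_pow' two_ne_zero, hv₂]; exact even_two_mul _
  refine ⟨l + k + 1, l - k, w, ⟨by omega, by omega, ?_, by linarith, ?_⟩, ?_⟩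
  · rw [show 2 * l + 1 = l + k + 1 + (l - k) by ring,
      show 2 * k + 1 = l + k + 1 - (l - k) by ring] at hcop
    exact hcop.symm.of_add_sub
  · linarith
  · linarith

theorem exists_lt_of_odd (h : PrimitiveSquareAreaTriangle a b c r) (ha : Odd a) :
    ∃ a' b' c' r', PrimitiveSquareAreaTriangle a' b' c' r' ∧ a' * b' < a * b := by
  have hc : 0 < |c| := by
    rw [abs_pos]; rintro rfl; nlinarith [h.pythagorean, h.a_pos, h.b_pos]
  have htriple : PythagoreanTriple a b |c| := by
    rw [PythagoreanTriple, ← sq, ← sq, ← sq, sq_abs]; exact h.pythagorean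
  obtain ⟨m, n, rfl, rfl, -, hmn, hpar, hm⟩ := htriple.coprime_classification'
    (Int.isCoprime_iff_gcd_eq_one.mp h.coprime) (Int.odd_iff.mp ha) hc
  have hn : 0 < n := by nlinarith [h.b_pos]
  have hnm : n < m := by nlinarith [h.a_pos]
  obtain ⟨u, v, s, t, hu, hv, hs, ht, hs₀, ht₀, hst⟩ :=
    Int.exists_sq_of_mul_mul_sub_mul_add_eq_sq hn hnm (Int.isCoprime_iff_gcd_eq_one.mpr hmn)
      (by convert h.coprime using 1; ring)
      (by linarith [h.area] : m * n * ((m - n) * (m + n)) = r ^ 2)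
  have hs_odd : Odd s := by rw [← Int.odd_pow' two_ne_zero, ← hs, Int.odd_iff]; omega
  have ht_odd : Odd t := by rw [← Int.odd_pow' two_ne_zero, ← ht, Int.odd_iff]; omega
  obtain ⟨A, B, w, hT, hAB⟩ := exists_of_half_sum_half_sub (u := u) (v := v) hs_odd ht_odd
    hs₀ (by nlinarith) hst (by linear_combination -hs - ht + 2 * hu)
    (by linear_combination hs - ht + 2 * hv)
  have hm₁ : 1 ≤ m * (m ^ 2 - n ^ 2) :=
    one_le_mul_of_one_le_of_one_le (by omega) (by nlinarith)
  exact ⟨A, B, u, w, hT, by nlinarith⟩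

theorem exists_lt (h : PrimitiveSquareAreaTriangle a b c r) :
    ∃ a' b' c' r', PrimitiveSquareAreaTriangle a' b' c' r' ∧ a' * b' < a * b := by
  rcases Int.odd_or_odd_of_isCoprime h.coprime with ha | hb
  · exact h.exists_lt_of_odd ha
  · rw [mul_comm a b]
    exact h.symm.exists_lt_of_odd hb

theorem exists_of_rat {a b c r : ℚ} (ha : 0 < a) (hb : 0 < b) (h : a ^ 2 + b ^ 2 = c ^ 2)
    (harea : a * b / 2 = r ^ 2) : ∃ A B C R : ℤ, PrimitiveSquareAreaTriangle A B C R := by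
  obtain ⟨k, hk, A, B, hAB, hA, hB⟩ := Rat.exists_pos_mul_eq_coprime (b := b) ha
  have hsq : IsSquare ((A ^ 2 + B ^ 2 : ℤ) : ℚ) :=
    ⟨k * c, by push_cast; rw [← hA, ← hB]; linear_combination k ^ 2 * h⟩
  have harea' : IsSquare ((2 * (A * B) : ℤ) : ℚ) :=
    ⟨2 * k * r, by push_cast; rw [← hA, ← hB]; linear_combination 4 * k ^ 2 * harea⟩
  obtain ⟨C, hC⟩ := Rat.isSquare_intCast_iff.mp hsq
  obtain ⟨s, hs⟩ := Rat.isSquare_intCast_iff.mp harea'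
  obtain ⟨R, rfl⟩ : Even s := (Int.even_mul.mp (hs ▸ even_two_mul (A * B))).elim id id
  refine ⟨A, B, C, R, ⟨?_, ?_, hAB, by linear_combination hC, by linarith⟩⟩
  · exact_mod_cast hA ▸ mul_pos hk ha
  · exact_mod_cast hB ▸ mul_pos hk hb

end PrimitiveSquareAreaTriangle

theorem not_primitiveSquareAreaTriangle (a b c r : ℤ) :
    ¬ PrimitiveSquareAreaTriangle a b c r := by
  intro h
  induction hk : (a * b).toNat using Nat.strong_induction_on generalizing a b c r with
  | _ k ih =>
    obtain ⟨a', b', c', r', h', hlt⟩ := h.exists_lt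
    have hpos := mul_pos h'.a_pos h'.b_pos
    exact ih _ (by omega) a' b' c' r' h' rfl

/-- Theorem 3 (Fermat): no right triangle with positive rational sides has area the square
of a rational; in particular, `1` is not a congruent number. -/
theorem no_rational_right_triangle_with_square_area :
    (¬ ∃ a b c r : ℚ, 0 < a ∧ 0 < b ∧ 0 < c ∧ a ^ 2 + b ^ 2 = c ^ 2 ∧
        a * b / 2 = r ^ 2) ∧
    (¬ ∃ a b c : ℚ, 0 < a ∧ 0 < b ∧ 0 < c ∧ a ^ 2 + b ^ 2 = c ^ 2 ∧
        a * b = 2 * 1) := by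
  have no_square_area : ¬ ∃ a b c r : ℚ, 0 < a ∧ 0 < b ∧ 0 < c ∧
      a ^ 2 + b ^ 2 = c ^ 2 ∧ a * b / 2 = r ^ 2 := by
    rintro ⟨a, b, c, r, ha, hb, -, h, harea⟩
    obtain ⟨A, B, C, R, hT⟩ := PrimitiveSquareAreaTriangle.exists_of_rat ha hb h harea
    exact not_primitiveSquareAreaTriangle A B C R hT
  refine ⟨no_square_area, ?_⟩
  rintro ⟨a, b, c, ha, hb, hc, h, hab⟩
  exact no_square_area ⟨a, b, c, 1, ha, hb, hc, h, by rw [hab]; norm_num⟩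
end

section
/- The equation x⁴ + 4y⁴ = z² has no solutions in positive integers (equivalently, there is no integer right triangle with legs 2s² and r² and square area). -/
/-!
Infinite descent on `z`. Dividing out `gcd x y` leaves a coprime solution; if then `x` is even,
`z` is even too and `(y, x / 2, z / 2)` is a smaller solution. If `x` is odd, `(x², 2y², z)` is a
primitive Pythagorean triple, so `x² = m² - n²`, `y² = mn` and `z = m² + n²` with `m, n` coprime;
hence `m² = a⁴`, `n² = b⁴` and `a⁴ - b⁴ = x²`. Now `(x, b², a²)` is a primitive triple:
`b² = 2rs` and `a² = r² + s²` with, say, `r` even, which forces `r² = 4e⁴` and `s² = f⁴`. So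
`f⁴ + 4e⁴ = a²`, a solution with `|a| ≤ a⁴ = m² < z`.
-/

def X4Add4Y4EqZ2 (x y z : ℤ) : Prop :=
  x ≠ 0 ∧ y ≠ 0 ∧ 0 < z ∧ x ^ 4 + 4 * y ^ 4 = z ^ 2

-- Stated for `a ^ 2` so that the sign ambiguity `a = ±d²` disappears.
theorem Int.exists_sq_eq_pow_four_of_mul_eq_sq {a b c : ℤ} (hab : IsCoprime a b)
    (h : a * b = c ^ 2) : ∃ d, a ^ 2 = d ^ 4 := by
  obtain ⟨d, rfl | rfl⟩ := Int.sq_of_isCoprime hab h <;> exact ⟨d, by ring⟩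

theorem Int.exists_pow_four_of_two_mul_mul_eq_sq {r s b : ℤ} (hb : b ≠ 0) (hrs : IsCoprime r s)
    (hr : Even r) (h : 2 * r * s = b ^ 2) :
    ∃ e f, e ≠ 0 ∧ f ≠ 0 ∧ r ^ 2 = 4 * e ^ 4 ∧ s ^ 2 = f ^ 4 := by
  obtain ⟨t, rfl⟩ := hr.two_dvd
  obtain ⟨u, rfl⟩ : 2 ∣ b :=
    ((Int.even_pow' two_ne_zero).1 ⟨2 * t * s, by linear_combination -h⟩).two_dvd
  have hts : t * s = u ^ 2 := mul_left_cancel₀ four_ne_zero (by linear_combination h)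
  have hu : u ≠ 0 := by rintro rfl; simp at hb
  obtain ⟨e, he⟩ := Int.exists_sq_eq_pow_four_of_mul_eq_sq hrs.of_mul_left_right hts
  obtain ⟨f, hf⟩ := Int.exists_sq_eq_pow_four_of_mul_eq_sq (hrs.of_mul_left_right).symm
    (by rw [mul_comm, hts])
  have hts0 : t * s ≠ 0 := by rw [hts]; positivity
  refine ⟨e, f, ?_, ?_, by linear_combination 4 * he, hf⟩
  · rintro rfl
    exact left_ne_zero_of_mul hts0 (pow_eq_zero_iff two_ne_zero |>.1 (by simpa using he))
  · rintro rfl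
    exact right_ne_zero_of_mul hts0 (pow_eq_zero_iff two_ne_zero |>.1 (by simpa using hf))

theorem X4Add4Y4EqZ2.exists_isCoprime {x y z : ℤ} (h : X4Add4Y4EqZ2 x y z) :
    ∃ x' y' z', X4Add4Y4EqZ2 x' y' z' ∧ IsCoprime x' y' ∧ z' ≤ z := by
  obtain ⟨hx, hy, hz, h⟩ := h
  obtain ⟨g, x', y', hg, hgcd, rfl, rfl⟩ := Int.exists_gcd_one' (Int.gcd_pos_of_ne_zero_left y hx)
  obtain ⟨z', rfl⟩ : (g : ℤ) ^ 2 ∣ z :=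
    (Int.pow_dvd_pow_iff two_ne_zero).1 ⟨x' ^ 4 + 4 * y' ^ 4, by rw [← h]; ring⟩
  have hg : (1 : ℤ) ≤ g := by exact_mod_cast hg
  have hz' : 0 < z' := pos_of_mul_pos_right hz (by positivity)
  refine ⟨x', y', z', ⟨?_, ?_, hz', ?_⟩, Int.isCoprime_iff_gcd_eq_one.2 hgcd, ?_⟩
  · rintro rfl; simp at hx
  · rintro rfl; simp at hy
  · exact mul_left_cancel₀ (by positivity : (g : ℤ) ^ 4 ≠ 0) (by linear_combination h)
  · exact le_mul_of_one_le_left hz'.le (one_le_pow₀ hg)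

theorem X4Add4Y4EqZ2.exists_lt_of_even {x y z : ℤ} (h : X4Add4Y4EqZ2 x y z) (hx : Even x) :
    ∃ x' y' z', X4Add4Y4EqZ2 x' y' z' ∧ z' < z := by
  obtain ⟨hx0, hy, hz, h⟩ := h
  obtain ⟨a, rfl⟩ := hx.two_dvd
  obtain ⟨c, rfl⟩ : 2 ∣ z :=
    (Int.pow_dvd_pow_iff two_ne_zero).1 ⟨y ^ 4 + 4 * a ^ 4, by rw [← h]; ring⟩
  refine ⟨y, a, c, ⟨hy, right_ne_zero_of_mul hx0, by omega, ?_⟩, by omega⟩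
  exact mul_left_cancel₀ four_ne_zero (by linear_combination h)

theorem exists_pow_four_sub_pow_four_eq_sq_of_x4_add_4y4_eq_sq {x y z : ℤ} (hy : y ≠ 0)
    (hz : 0 < z) (h : x ^ 4 + 4 * y ^ 4 = z ^ 2) (hxy : IsCoprime x y) (hx : Odd x) :
    ∃ a b, b ≠ 0 ∧ IsCoprime a b ∧ a ^ 4 - b ^ 4 = x ^ 2 ∧ a ^ 4 < z := by
  have ht : PythagoreanTriple (x ^ 2) (2 * y ^ 2) z := by
    unfold PythagoreanTriple; linear_combination h
  have hcop : Int.gcd (x ^ 2) (2 * y ^ 2) = 1 := Int.isCoprime_iff_gcd_eq_one.1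
    ((Int.isCoprime_two_right.2 hx).mul_right hxy.pow_right).pow_left
  obtain ⟨m, n, hxmn, hymn, rfl, hmn, -, -⟩ :=
    ht.coprime_classification' hcop (Int.odd_iff.1 hx.pow) hz
  have hmn : IsCoprime m n := Int.isCoprime_iff_gcd_eq_one.2 hmn
  have hymn : m * n = y ^ 2 := mul_left_cancel₀ two_ne_zero (by linear_combination -hymn)
  obtain ⟨a, ha⟩ := Int.exists_sq_eq_pow_four_of_mul_eq_sq hmn hymn
  obtain ⟨b, hb⟩ := Int.exists_sq_eq_pow_four_of_mul_eq_sq hmn.symm (by rw [mul_comm, hymn])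
  have hn : n ≠ 0 := by rintro rfl; exact pow_ne_zero 2 hy (by simpa using hymn.symm)
  refine ⟨a, b, ?_, ?_, by linear_combination hb - ha - hxmn, ?_⟩
  · rintro rfl; simp [hn] at hb
  · rw [← IsCoprime.pow_iff (m := 4) (n := 4) (by norm_num) (by norm_num), ← ha, ← hb]
    exact hmn.pow
  · rw [← ha]; exact lt_add_of_pos_right _ (by positivity)

theorem exists_x4_add_4y4_eq_sq_of_pow_four_sub_pow_four_eq_sq {a b c : ℤ} (hb : b ≠ 0)
    (hab : IsCoprime a b) (hc : Odd c) (h : a ^ 4 - b ^ 4 = c ^ 2) :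
    ∃ e f, X4Add4Y4EqZ2 f e |a| := by
  have ht : PythagoreanTriple c (b ^ 2) (a ^ 2) := by
    unfold PythagoreanTriple; linear_combination -h
  have hcb : IsCoprime c (b ^ 2) := by
    rw [← IsCoprime.pow_iff (m := 2) (n := 2) two_pos two_pos]
    refine IsCoprime.of_add_mul_left_left (z := 1) ?_
    rw [show c ^ 2 + (b ^ 2) ^ 2 * 1 = a ^ 4 by linear_combination -h, ← pow_mul]
    exact hab.pow
  have ha : a ≠ 0 := by
    rintro rfl
    have : 0 < b ^ 4 + c ^ 2 := by positivity
    linarith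
  obtain ⟨r, s, -, hbrs, hars, hrs, hpar, -⟩ :=
    ht.coprime_classification' (Int.isCoprime_iff_gcd_eq_one.1 hcb) (Int.odd_iff.1 hc)
      (by positivity)
  have hrs : IsCoprime r s := Int.isCoprime_iff_gcd_eq_one.2 hrs
  obtain ⟨e, f, he, hf, hef⟩ : ∃ e f, e ≠ 0 ∧ f ≠ 0 ∧ f ^ 4 + 4 * e ^ 4 = a ^ 2 := by
    rcases hpar with ⟨hr, -⟩ | ⟨-, hs⟩
    · obtain ⟨e, f, he, hf, hre, hsf⟩ :=
        Int.exists_pow_four_of_two_mul_mul_eq_sq hb hrs (Int.even_iff.2 hr) hbrs.symm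
      exact ⟨e, f, he, hf, by linear_combination -hars - hre - hsf⟩
    · obtain ⟨e, f, he, hf, hse, hrf⟩ := Int.exists_pow_four_of_two_mul_mul_eq_sq hb hrs.symm
        (Int.even_iff.2 hs) (by linear_combination -hbrs)
      exact ⟨e, f, he, hf, by linear_combination -hars - hse - hrf⟩
  exact ⟨e, f, hf, he, abs_pos.2 ha, by rw [sq_abs, hef]⟩

theorem X4Add4Y4EqZ2.exists_lt {x y z : ℤ} (h : X4Add4Y4EqZ2 x y z) :
    ∃ x' y' z', X4Add4Y4EqZ2 x' y' z' ∧ z' < z := by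
  obtain ⟨u, v, w, huvw, huv, hwz⟩ := h.exists_isCoprime
  rcases Int.even_or_odd u with hu | hu
  · obtain ⟨x', y', z', h', hz'w⟩ := huvw.exists_lt_of_even hu
    exact ⟨x', y', z', h', hz'w.trans_le hwz⟩
  · obtain ⟨-, hv, hw, huvw⟩ := huvw
    obtain ⟨a, b, hb, hab, habu, haw⟩ :=
      exists_pow_four_sub_pow_four_eq_sq_of_x4_add_4y4_eq_sq hv hw huvw huv hu
    obtain ⟨e, f, hfea⟩ := exists_x4_add_4y4_eq_sq_of_pow_four_sub_pow_four_eq_sq hb hab hu habu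
    refine ⟨f, e, |a|, hfea, ?_⟩
    calc |a| = a.natAbs := Int.abs_eq_natAbs a
      _ ≤ a ^ 2 := Int.natAbs_le_self_sq a
      _ ≤ (a ^ 2) ^ 2 := Int.le_self_sq _
      _ < w := by linarith
      _ ≤ z := hwz

theorem not_X4Add4Y4EqZ2 {x y z : ℤ} : ¬X4Add4Y4EqZ2 x y z := by
  intro h
  induction hn : z.toNat using Nat.strong_induction_on generalizing x y z with
  | _ n ih =>
  obtain ⟨x', y', z', h', hz'⟩ := h.exists_lt
  exact ih _ (by have := h'.2.2.1; omega) h' rfl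

/-- The equation `x⁴ + 4y⁴ = z²` has no solutions in positive integers. -/
theorem no_x4_add_4y4_eq_z2 (x y z : ℤ) (hx : 0 < x) (hy : 0 < y) (hz : 0 < z) :
    x ^ 4 + 4 * y ^ 4 ≠ z ^ 2 := fun h => not_X4Add4Y4EqZ2 ⟨hx.ne', hy.ne', hz, h⟩
end

section
/- A squarefree positive integer α is a congruent number if and only if the equation α·y² = x³ - x has a rational solution (x, y) with y ≠ 0. -/
/-!
A point `(x, y)` with `y ≠ 0` on `α y² = x³ - x` gives the right triangle with legs
`(x² - 1) / y`, `2x / y` and hypotenuse `(x² + 1) / y`, of area `α`. Conversely a right triangle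
`(a, b, c)` of area `α` gives the point `x = c² / 4α`, `y = c (a² - b²) / 8α²`; here `y ≠ 0`,
since `c = 0` would force `a = b = 0`, and `a² = b²` would make `c / a` a square root of `2`.
-/

section

variable {K : Type*} [Field K]

theorem exists_right_triangle_of_mem_curve {α x y : K} (hy : y ≠ 0)
    (h : α * y ^ 2 = x ^ 3 - x) :
    ∃ a b c : K, a ^ 2 + b ^ 2 = c ^ 2 ∧ a * b = 2 * α :=
  ⟨(x ^ 2 - 1) / y, 2 * x / y, (x ^ 2 + 1) / y, by field_simp; ring,
    by field_simp; linear_combination -2 * h⟩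

theorem sq_ne_sq_of_sq_add_sq_eq_sq (h2 : ¬IsSquare (2 : K)) {a b c : K} (ha : a ≠ 0)
    (h : a ^ 2 + b ^ 2 = c ^ 2) : a ^ 2 ≠ b ^ 2 := by
  intro hab
  refine h2 ⟨c / a, ?_⟩
  rw [div_mul_div_comm, eq_div_iff (mul_ne_zero ha ha)]
  linear_combination h + hab

variable [LinearOrder K] [IsStrictOrderedRing K]

theorem exists_mem_curve_of_right_triangle (h2 : ¬IsSquare (2 : K)) {α a b c : K} (hα : α ≠ 0)
    (h : a ^ 2 + b ^ 2 = c ^ 2) (hab : a * b = 2 * α) :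
    ∃ x y : K, y ≠ 0 ∧ α * y ^ 2 = x ^ 3 - x := by
  have ha : a ≠ 0 := by
    rintro rfl
    exact hα (by linear_combination -hab / 2)
  have hc : c ≠ 0 := by
    rintro rfl
    exact ha (by nlinarith [sq_nonneg a, sq_nonneg b])
  have hsq : a ^ 2 - b ^ 2 ≠ 0 := sub_ne_zero.mpr (sq_ne_sq_of_sq_add_sq_eq_sq h2 ha h)
  refine ⟨c ^ 2 / (4 * α), c * (a ^ 2 - b ^ 2) / (8 * α ^ 2), by positivity, ?_⟩
  field_simp
  linear_combination (64 * (a ^ 2 + b ^ 2 + c ^ 2)) * h - (256 * (a * b + 2 * α)) * hab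

end

theorem congruent_iff_point_on_curve_general (α : ℤ) (hpos : 0 < α) :
    (∃ a b c : ℚ, a ^ 2 + b ^ 2 = c ^ 2 ∧ a * b = 2 * (α : ℚ)) ↔
    (∃ x y : ℚ, y ≠ 0 ∧ (α : ℚ) * y ^ 2 = x ^ 3 - x) := by
  have hα : (α : ℚ) ≠ 0 := by exact_mod_cast hpos.ne'
  have h2 : ¬IsSquare (2 : ℚ) := Rat.isSquare_ofNat_iff.not.mpr Nat.prime_two.not_isSquare
  exact ⟨fun ⟨_, _, _, h, hab⟩ => exists_mem_curve_of_right_triangle h2 hα h hab,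
    fun ⟨_, _, hy, h⟩ => exists_right_triangle_of_mem_curve hy h⟩

/-- Proposition 6: a squarefree positive integer `α` is congruent iff the equation
`α y² = x³ - x` has a rational solution with `y ≠ 0`. -/
theorem congruent_iff_point_on_curve (α : ℤ) (hsf : Squarefree α) (hpos : 0 < α) :
    (∃ a b c : ℚ, a ^ 2 + b ^ 2 = c ^ 2 ∧ a * b = 2 * (α : ℚ)) ↔
    (∃ x y : ℚ, y ≠ 0 ∧ (α : ℚ) * y ^ 2 = x ^ 3 - x) :=
  congruent_iff_point_on_curve_general α hpos
end

section
/- If a squarefree positive integer α is congruent, then the equation α·y² = x³ - x has infinitely many rational solutions (x, y). -/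
/-!
A right triangle with legs `a, b`, hypotenuse `c` and area `α` gives the point
`P = ((c/2)², c(a² - b²)/8)` on `E : y² = x³ - α²x`, with `y ≠ 0` because `2` is not a rational
square. Doubling on `E` sends `x` to `((x² + α²)/(2y))²`. As `α` is squarefree, `v₂(α) ≤ 1`, and
comparing `v₂(x)` with `v₂(α)` (using that odd squares are `1 mod 8`) shows that `v₂(x(2P)) ≤ -2`,
after which every doubling lowers `v₂(x)` by exactly `2`. So the points `2ᵏP` are pairwise
distinct, and `(x, y) ↦ (x/α, y/α²)` carries them to solutions of `α y² = x³ - x`.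
-/

section Valuation

variable {p : ℕ} [Fact p.Prime]

lemma padicValRat_sq (q : ℚ) : padicValRat p (q ^ 2) = 2 * padicValRat p q := by
  rw [padicValRat.pow]
  norm_cast

lemma padicValRat_le_one_of_squarefree {n : ℤ} (hn : Squarefree n) : padicValRat p n ≤ 1 := by
  rw [padicValRat.of_int, padicValInt, ← Nat.factorization_def _ Fact.out]
  exact_mod_cast (Int.squarefree_natAbs.mpr hn).natFactorization_le_one p

lemma padicValRat_sq_add_sq_of_lt {r s : ℚ} (hr : r ≠ 0) (hs : s ≠ 0)
    (h : padicValRat p r < padicValRat p s) :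
    padicValRat p (r ^ 2 + s ^ 2) = 2 * padicValRat p r := by
  rw [padicValRat.add_eq_of_lt (by positivity) (pow_ne_zero 2 hr) (pow_ne_zero 2 hs)
    (by rw [padicValRat_sq, padicValRat_sq]; omega), padicValRat_sq]

lemma padicValRat_sq_sub_sq_of_lt {r s : ℚ} (hr : r ≠ 0) (hs : s ≠ 0)
    (h : padicValRat p r < padicValRat p s) :
    padicValRat p (r ^ 2 - s ^ 2) = 2 * padicValRat p r := by
  have hne : r ^ 2 - s ^ 2 ≠ 0 := fun h0 => by
    have := congrArg (padicValRat p) (sub_eq_zero.mp h0)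
    rw [padicValRat_sq, padicValRat_sq] at this
    omega
  rw [sub_eq_add_neg] at hne ⊢
  rw [padicValRat.add_eq_of_lt hne (pow_ne_zero 2 hr) (neg_ne_zero.mpr (pow_ne_zero 2 hs))
    (by rw [padicValRat.neg, padicValRat_sq, padicValRat_sq]; omega), padicValRat_sq]

end Valuation

lemma padicValRat_two_two : padicValRat 2 2 = 1 := by
  simpa using padicValRat.self (p := 2) one_lt_two

lemma Rat.odd_num_den_of_padicValRat_two_eq_zero {q : ℚ} (hq : q ≠ 0)
    (h : padicValRat 2 q = 0) : Odd q.num ∧ Odd q.den := by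
  have hnum : q.num.natAbs ≠ 0 := by simpa using hq
  have hcop : ¬(2 ∣ q.num.natAbs ∧ 2 ∣ q.den) := fun ⟨h₁, h₂⟩ =>
    Nat.not_coprime_of_dvd_of_dvd one_lt_two h₁ h₂ q.reduced
  rw [padicValRat_def, padicValInt, sub_eq_zero, Nat.cast_inj] at h
  rw [dvd_iff_padicValNat_ne_zero hnum, dvd_iff_padicValNat_ne_zero q.den_nz, h, and_self,
    not_not] at hcop
  rw [← Int.natAbs_odd, Nat.odd_iff, ← Nat.two_dvd_ne_zero, Nat.odd_iff, ← Nat.two_dvd_ne_zero,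
    dvd_iff_padicValNat_ne_zero hnum, dvd_iff_padicValNat_ne_zero q.den_nz, h, hcop]
  simp

lemma three_le_padicValRat_two_sq_sub_one {q : ℚ} (hq0 : q ≠ 0) (hq : padicValRat 2 q = 0)
    (h1 : q ^ 2 ≠ 1) : 3 ≤ padicValRat 2 (q ^ 2 - 1) := by
  obtain ⟨hnum, hden⟩ := Rat.odd_num_den_of_padicValRat_two_eq_zero hq0 hq
  obtain ⟨m, hm⟩ : (8 : ℤ) ∣ q.num ^ 2 - q.den ^ 2 := by
    simpa using dvd_sub (Int.eight_dvd_sq_sub_one_of_odd hnum)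
      (Int.eight_dvd_sq_sub_one_of_odd (hden.natCast (R := ℤ)))
  have hq' : q ^ 2 - 1 = 2 ^ 3 * (m / q.den ^ 2) := by
    have hm' : (q.num : ℚ) ^ 2 - q.den ^ 2 = 8 * m := by exact_mod_cast hm
    conv_lhs => rw [← Rat.num_div_den q]
    field_simp
    linear_combination hm'
  have hm0 : (m : ℚ) ≠ 0 := by
    rintro hm0
    exact h1 (by simpa [hm0, sub_eq_zero] using hq')
  rw [hq', padicValRat.mul (by norm_num) (by positivity), padicValRat.div hm0 (by positivity),
    padicValRat.pow _, padicValRat.pow _, padicValRat_two_two, padicValRat.of_int,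
    padicValRat.of_nat, padicValNat.eq_zero_of_not_dvd]
  · simp
  · simpa [← even_iff_two_dvd] using hden

lemma padicValRat_two_sq_add_one {q : ℚ} (hq0 : q ≠ 0) (hq : padicValRat 2 q = 0) :
    padicValRat 2 (q ^ 2 + 1) = 1 := by
  by_cases h1 : q ^ 2 = 1
  · rw [h1, one_add_one_eq_two, padicValRat_two_two]
  · have hsum : q ^ 2 + 1 ≠ 0 := by positivity
    rw [show q ^ 2 + 1 = 2 + (q ^ 2 - 1) by ring] at hsum ⊢
    rw [padicValRat.add_eq_of_lt hsum two_ne_zero (sub_ne_zero.mpr h1)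
      (by linarith [padicValRat_two_two, three_le_padicValRat_two_sq_sub_one hq0 hq h1]),
      padicValRat_two_two]

lemma padicValRat_two_sq_add_sq_of_eq {r s : ℚ} (hr : r ≠ 0) (hs : s ≠ 0)
    (h : padicValRat 2 r = padicValRat 2 s) :
    padicValRat 2 (r ^ 2 + s ^ 2) = 2 * padicValRat 2 s + 1 := by
  have hq : padicValRat 2 (r / s) = 0 := by rw [padicValRat.div hr hs, h, sub_self]
  rw [show r ^ 2 + s ^ 2 = s ^ 2 * ((r / s) ^ 2 + 1) by field_simp,
    padicValRat.mul (by positivity) (by positivity), padicValRat_sq,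
    padicValRat_two_sq_add_one (div_ne_zero hr hs) hq]

lemma le_padicValRat_two_sq_sub_sq_of_eq {r s : ℚ} (hr : r ≠ 0) (hs : s ≠ 0)
    (h : padicValRat 2 r = padicValRat 2 s) (hrs : r ^ 2 ≠ s ^ 2) :
    2 * padicValRat 2 s + 3 ≤ padicValRat 2 (r ^ 2 - s ^ 2) := by
  have hq : padicValRat 2 (r / s) = 0 := by rw [padicValRat.div hr hs, h, sub_self]
  have hq1 : (r / s) ^ 2 ≠ 1 := by rwa [div_pow, ne_eq, div_eq_one_iff_eq (pow_ne_zero 2 hs)]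
  rw [show r ^ 2 - s ^ 2 = s ^ 2 * ((r / s) ^ 2 - 1) by field_simp,
    padicValRat.mul (pow_ne_zero 2 hs) (sub_ne_zero.mpr hq1), padicValRat_sq]
  linarith [three_le_padicValRat_two_sq_sub_one (div_ne_zero hr hs) hq hq1]

lemma two_mul_padicValRat_two_sq_add_sq_le {x N : ℚ} (hx : x ≠ 0) (hN : N ≠ 0)
    (hN₁ : padicValRat 2 N ≤ 1) (hxN : x ^ 2 ≠ N ^ 2) :
    2 * padicValRat 2 (x ^ 2 + N ^ 2) ≤ padicValRat 2 x + padicValRat 2 (x ^ 2 - N ^ 2) := by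
  rcases lt_trichotomy (padicValRat 2 x) (padicValRat 2 N) with h | h | h
  · rw [padicValRat_sq_add_sq_of_lt hx hN h, padicValRat_sq_sub_sq_of_lt hx hN h]
    omega
  · rw [padicValRat_two_sq_add_sq_of_eq hx hN h]
    linarith [le_padicValRat_two_sq_sub_sq_of_eq hx hN h hxN]
  · rw [add_comm, padicValRat_sq_add_sq_of_lt hN hx h, ← neg_sub, padicValRat.neg,
      padicValRat_sq_sub_sq_of_lt hN hx h]
    omega

/-- The `x`-coordinate of `2 • (x, y)` on the curve `y² = x³ - N²x`. -/
def doubleX {F : Type*} [Field F] (N x y : F) : F :=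
  ((x ^ 2 + N ^ 2) / (2 * y)) ^ 2

/-- `doubleX N x y` and `doubleX N x y ± N` are all squares, hence so is their product. -/
lemma exists_sq_eq_doubleX {F : Type*} [Field F] [NeZero (2 : F)] {N x y : F} (hy : y ≠ 0)
    (hxy : y ^ 2 = x ^ 3 - N ^ 2 * x) :
    ∃ y' : F, y' ^ 2 = doubleX N x y ^ 3 - N ^ 2 * doubleX N x y := by
  have hsub : doubleX N x y - N = ((x ^ 2 - 2 * N * x - N ^ 2) / (2 * y)) ^ 2 := by
    rw [doubleX]
    field_simp
    linear_combination (-4 * N) * hxy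
  have hadd : doubleX N x y + N = ((x ^ 2 + 2 * N * x - N ^ 2) / (2 * y)) ^ 2 := by
    rw [doubleX]
    field_simp
    linear_combination (4 * N) * hxy
  refine ⟨(x ^ 2 + N ^ 2) / (2 * y) * ((x ^ 2 - 2 * N * x - N ^ 2) / (2 * y)) *
    ((x ^ 2 + 2 * N * x - N ^ 2) / (2 * y)), ?_⟩
  rw [mul_pow, mul_pow, ← hsub, ← hadd, ← doubleX]
  ring

section Doubling

variable {N x y : ℚ}

lemma ne_zero_and_sq_sub_sq_ne_zero (hy : y ≠ 0) (hxy : y ^ 2 = x ^ 3 - N ^ 2 * x) :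
    x ≠ 0 ∧ x ^ 2 - N ^ 2 ≠ 0 :=
  mul_ne_zero_iff.mp <| by
    rw [show x * (x ^ 2 - N ^ 2) = y ^ 2 by linear_combination -hxy]
    exact pow_ne_zero 2 hy

lemma padicValRat_two_doubleX (hN : N ≠ 0) (hy : y ≠ 0) (hxy : y ^ 2 = x ^ 3 - N ^ 2 * x) :
    padicValRat 2 (doubleX N x y) =
      2 * padicValRat 2 (x ^ 2 + N ^ 2) - 2 - padicValRat 2 x - padicValRat 2 (x ^ 2 - N ^ 2) := by
  obtain ⟨hx, hxN⟩ := ne_zero_and_sq_sub_sq_ne_zero hy hxy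
  have hvy := congrArg (padicValRat 2)
    (show y ^ 2 = x * (x ^ 2 - N ^ 2) by linear_combination hxy)
  rw [padicValRat_sq, padicValRat.mul hx hxN] at hvy
  rw [doubleX, padicValRat_sq, padicValRat.div (by positivity) (by positivity),
    padicValRat.mul two_ne_zero hy, padicValRat_two_two]
  omega

lemma padicValRat_two_doubleX_le (hN : N ≠ 0) (hN₁ : padicValRat 2 N ≤ 1) (hy : y ≠ 0)
    (hxy : y ^ 2 = x ^ 3 - N ^ 2 * x) : padicValRat 2 (doubleX N x y) ≤ -2 := by
  obtain ⟨hx, hxN⟩ := ne_zero_and_sq_sub_sq_ne_zero hy hxy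
  rw [padicValRat_two_doubleX hN hy hxy]
  linarith [two_mul_padicValRat_two_sq_add_sq_le hx hN hN₁ (sub_ne_zero.mp hxN)]

lemma padicValRat_two_doubleX_of_lt (hN : N ≠ 0) (hy : y ≠ 0) (hxy : y ^ 2 = x ^ 3 - N ^ 2 * x)
    (hlt : padicValRat 2 x < padicValRat 2 N) :
    padicValRat 2 (doubleX N x y) = padicValRat 2 x - 2 := by
  obtain ⟨hx, -⟩ := ne_zero_and_sq_sub_sq_ne_zero hy hxy
  rw [padicValRat_two_doubleX hN hy hxy, padicValRat_sq_add_sq_of_lt hx hN hlt,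
    padicValRat_sq_sub_sq_of_lt hx hN hlt]
  ring

lemma doubleX_ne_zero (hN : N ≠ 0) (hy : y ≠ 0) : doubleX N x y ≠ 0 := by
  rw [doubleX]
  positivity

lemma ne_zero_of_padicValRat_lt (hx : x ≠ 0) (hlt : padicValRat 2 x < padicValRat 2 N)
    (hxy : y ^ 2 = x ^ 3 - N ^ 2 * x) : y ≠ 0 := by
  rintro rfl
  have hxN : x ^ 2 = N ^ 2 := mul_left_cancel₀ hx (by linear_combination -hxy)
  have := congrArg (padicValRat 2) hxN
  rw [padicValRat_sq, padicValRat_sq] at this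
  omega

end Doubling

section Iteration

variable {N : ℚ}

lemma exists_point_padicValRat_two_eq (hN : N ≠ 0) {x y : ℚ} (hx : x ≠ 0)
    (hlt : padicValRat 2 x < padicValRat 2 N) (hxy : y ^ 2 = x ^ 3 - N ^ 2 * x) (k : ℕ) :
    ∃ x' y' : ℚ, y' ^ 2 = x' ^ 3 - N ^ 2 * x' ∧ x' ≠ 0 ∧
      padicValRat 2 x' = padicValRat 2 x - 2 * k := by
  induction k with
  | zero => exact ⟨x, y, hxy, hx, by simp⟩
  | succ k ih =>
    obtain ⟨x', y', hxy', hx', hv'⟩ := ih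
    have hy' := ne_zero_of_padicValRat_lt hx' (by omega) hxy'
    obtain ⟨y'', hxy''⟩ := exists_sq_eq_doubleX hy' hxy'
    refine ⟨doubleX N x' y', y'', hxy'', doubleX_ne_zero hN hy', ?_⟩
    rw [padicValRat_two_doubleX_of_lt hN hy' hxy' (by omega), hv']
    push_cast
    ring

theorem infinite_setOf_sq_eq_cubic (hN : N ≠ 0) (hN₀ : 0 ≤ padicValRat 2 N)
    (hN₁ : padicValRat 2 N ≤ 1) {x y : ℚ} (hy : y ≠ 0) (hxy : y ^ 2 = x ^ 3 - N ^ 2 * x) :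
    {p : ℚ × ℚ | p.2 ^ 2 = p.1 ^ 3 - N ^ 2 * p.1}.Infinite := by
  obtain ⟨y₁, hxy₁⟩ := exists_sq_eq_doubleX hy hxy
  have hv₁ := padicValRat_two_doubleX_le hN hN₁ hy hxy
  choose X Y hXY _ hv using
    exists_point_padicValRat_two_eq hN (doubleX_ne_zero hN hy) (by omega) hxy₁
  refine Set.infinite_of_injective_forall_mem (f := fun k => (X k, Y k)) ?_ hXY
  intro k l hkl
  have := congrArg (fun p => padicValRat 2 p.1) hkl
  simp only [hv] at this
  omega

end Iteration

lemma exists_point_of_right_triangle {N a b c : ℚ} (hN : N ≠ 0) (hpyth : a ^ 2 + b ^ 2 = c ^ 2)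
    (harea : a * b = 2 * N) : ∃ x y : ℚ, y ≠ 0 ∧ y ^ 2 = x ^ 3 - N ^ 2 * x := by
  have ha : a ≠ 0 := by rintro rfl; apply hN; linear_combination -harea / 2
  have hc : c ≠ 0 := by rintro rfl; nlinarith [sq_pos_of_ne_zero ha, sq_nonneg b]
  have hab : a ^ 2 ≠ b ^ 2 := by
    intro hab
    have := congrArg (padicValRat 2) (show c ^ 2 = 2 * a ^ 2 by linear_combination -hpyth - hab)
    rw [padicValRat_sq, padicValRat.mul two_ne_zero (pow_ne_zero 2 ha), padicValRat_sq,
      padicValRat_two_two] at this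
    omega
  refine ⟨(c / 2) ^ 2, c * (a ^ 2 - b ^ 2) / 8, by simp [hc, sub_eq_zero, hab], ?_⟩
  linear_combination (c ^ 2 * (a ^ 2 + b ^ 2 + c ^ 2) / 64) * hpyth +
    (-(c ^ 2) * (2 * N + a * b) / 16) * harea

theorem congruent_infinitely_many_points_general (α : ℤ) (hsf : Squarefree α)
    (h : ∃ a b c : ℚ, a ^ 2 + b ^ 2 = c ^ 2 ∧ a * b = 2 * (α : ℚ)) :
    {p : ℚ × ℚ | (α : ℚ) * p.2 ^ 2 = p.1 ^ 3 - p.1}.Infinite := by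
  obtain ⟨a, b, c, hpyth, harea⟩ := h
  have hα : (α : ℚ) ≠ 0 := by exact_mod_cast hsf.ne_zero
  obtain ⟨x, y, hy, hxy⟩ := exists_point_of_right_triangle hα hpyth harea
  have hcurve := infinite_setOf_sq_eq_cubic hα (by simp [padicValRat.of_int])
    (padicValRat_le_one_of_squarefree hsf) hy hxy
  have hscale : Function.Injective fun p : ℚ × ℚ => (p.1 / α, p.2 / α ^ 2) := fun _ _ h =>
    Prod.ext ((div_left_inj' hα).mp (congrArg Prod.fst h))
      ((div_left_inj' (pow_ne_zero 2 hα)).mp (congrArg Prod.snd h))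
  refine (hcurve.image hscale.injOn).mono ?_
  rintro _ ⟨p, hp, rfl⟩
  simp only [Set.mem_ofPred_eq] at hp ⊢
  field_simp
  linear_combination hp

/-- Corollary 9: if a squarefree positive integer `α` is congruent, then `α y² = x³ - x` has
infinitely many rational solutions. -/
theorem congruent_infinitely_many_points (α : ℤ) (hsf : Squarefree α) (hpos : 0 < α)
    (h : ∃ a b c : ℚ, a ^ 2 + b ^ 2 = c ^ 2 ∧ a * b = 2 * (α : ℚ)) :
    {p : ℚ × ℚ | (α : ℚ) * p.2 ^ 2 = p.1 ^ 3 - p.1}.Infinite :=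
  congruent_infinitely_many_points_general α hsf h
end

section
/- If a squarefree positive integer α is congruent, then α is the area of infinitely many pairwise non-equal right triangles with positive rational sides. -/
/-!
Doubling the point of `y² = x³ - α²x` attached to a right triangle of area `α` gives another
right triangle of area `α`. In a rational Pythagorean triple `a² + b² = c²` the legs have
distinct 2-adic valuations and `v₂(ab) ≥ 2 v₂(c) + 2` (odd squares are `1 mod 8`), so each
doubling lowers the 2-adic valuation of the hypotenuse by exactly one, and the iterates are
pairwise distinct.
-/

lemma odd_and_four_dvd_of_sq_add_sq {x y z : ℤ} (hx : Odd x) (h : x ^ 2 + y ^ 2 = z ^ 2) :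
    Odd z ∧ 4 ∣ y := by
  obtain ⟨m, rfl⟩ := hx
  rcases Int.even_or_odd y with ⟨k, rfl⟩ | ⟨k, rfl⟩
  · have hz : Odd z := by
      rw [← Int.odd_pow' two_ne_zero, ← h]
      exact ⟨2 * (m ^ 2 + m + k ^ 2), by ring⟩
    obtain ⟨n, rfl⟩ := hz
    have hk : Even (k ^ 2) := by
      have key : 4 * k ^ 2 = 4 * (n * (n + 1) - m * (m + 1)) := by linear_combination h
      rw [mul_left_cancel₀ four_ne_zero key]
      exact (Int.even_mul_succ_self n).sub (Int.even_mul_succ_self m)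
    obtain ⟨j, rfl⟩ := (Int.even_pow.mp hk).1
    exact ⟨⟨n, rfl⟩, ⟨j, by ring⟩⟩
  · exfalso
    obtain ⟨n, rfl⟩ : Even z := by
      rw [← Int.even_pow' two_ne_zero, ← h]
      exact ⟨2 * (m ^ 2 + m + k ^ 2 + k) + 1, by ring⟩
    have : 4 * n ^ 2 = 4 * (m ^ 2 + m + k ^ 2 + k) + 2 := by linear_combination -h
    omega

lemma padicValInt_two_eq_zero_of_odd {x : ℤ} (hx : Odd x) : padicValInt 2 x = 0 :=
  padicValInt.eq_zero_of_not_dvd (by simpa [← even_iff_two_dvd] using hx)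

lemma padicValInt_two_of_sq_add_sq_of_odd {x y z : ℤ} (hx : Odd x) (hy : y ≠ 0)
    (h : x ^ 2 + y ^ 2 = z ^ 2) :
    padicValInt 2 x = 0 ∧ padicValInt 2 z = 0 ∧ 2 ≤ padicValInt 2 y := by
  obtain ⟨hz, h4⟩ := odd_and_four_dvd_of_sq_add_sq hx h
  refine ⟨padicValInt_two_eq_zero_of_odd hx, padicValInt_two_eq_zero_of_odd hz, ?_⟩
  exact ((padicValInt_dvd_iff 2 y).mp (by simpa using h4)).resolve_left hy

lemma padicValInt_two_of_sq_add_sq {x y z : ℤ} (hx : x ≠ 0) (hy : y ≠ 0)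
    (h : x ^ 2 + y ^ 2 = z ^ 2) :
    padicValInt 2 x ≠ padicValInt 2 y ∧
      2 * padicValInt 2 z + 2 ≤ padicValInt 2 x + padicValInt 2 y := by
  induction hn : x.natAbs using Nat.strong_induction_on generalizing x y z with
  | _ n ih =>
  rcases Int.even_or_odd x with hxe | hxo
  · rcases Int.even_or_odd y with hye | hyo
    · obtain ⟨x', rfl⟩ := even_iff_two_dvd.mp hxe
      obtain ⟨y', rfl⟩ := even_iff_two_dvd.mp hye
      obtain ⟨z', rfl⟩ : 2 ∣ z := by
        rw [← even_iff_two_dvd, ← Int.even_pow' two_ne_zero, ← h]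
        exact ⟨2 * x' ^ 2 + 2 * y' ^ 2, by ring⟩
      have hx' : x' ≠ 0 := right_ne_zero_of_mul hx
      have hy' : y' ≠ 0 := right_ne_zero_of_mul hy
      have hz' : z' ≠ 0 := by rintro rfl; nlinarith [sq_pos_of_ne_zero hx', sq_nonneg y']
      have h' : x' ^ 2 + y' ^ 2 = z' ^ 2 := by
        have : 4 * (x' ^ 2 + y' ^ 2) = 4 * z' ^ 2 := by linear_combination h
        exact mul_left_cancel₀ four_ne_zero this
      have hlt : x'.natAbs < n := by
        have := Int.natAbs_pos.mpr hx'
        rw [← hn, Int.natAbs_mul]; norm_num; omega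
      have := ih _ hlt hx' hy' h' rfl
      have h2 : padicValInt 2 2 = 1 := padicValInt.self one_lt_two
      simp only [padicValInt.mul two_ne_zero hx', padicValInt.mul two_ne_zero hy',
        padicValInt.mul two_ne_zero hz', h2]
      omega
    · have := padicValInt_two_of_sq_add_sq_of_odd (z := z) hyo hx (by linear_combination h)
      omega
  · have := padicValInt_two_of_sq_add_sq_of_odd hxo hy h
    omega

lemma padicValRat_two_of_sq_add_sq {a b c : ℚ} (ha : a ≠ 0) (hb : b ≠ 0)
    (h : a ^ 2 + b ^ 2 = c ^ 2) :
    padicValRat 2 a ≠ padicValRat 2 b ∧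
      2 * padicValRat 2 c + 2 ≤ padicValRat 2 a + padicValRat 2 b := by
  have hc : c ≠ 0 := by rintro rfl; nlinarith [sq_pos_of_ne_zero ha, sq_nonneg b]
  set D : ℚ := a.den * b.den * c.den
  have hD : D ≠ 0 := by positivity
  obtain ⟨x, hx⟩ : ∃ x : ℤ, (x : ℚ) = a * D :=
    ⟨a.num * b.den * c.den, by push_cast [D, ← a.mul_den_eq_num]; ring⟩
  obtain ⟨y, hy⟩ : ∃ y : ℤ, (y : ℚ) = b * D :=
    ⟨b.num * a.den * c.den, by push_cast [D, ← b.mul_den_eq_num]; ring⟩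
  obtain ⟨z, hz⟩ : ∃ z : ℤ, (z : ℚ) = c * D :=
    ⟨c.num * a.den * b.den, by push_cast [D, ← c.mul_den_eq_num]; ring⟩
  have hxyz : x ^ 2 + y ^ 2 = z ^ 2 := by
    have : (x : ℚ) ^ 2 + (y : ℚ) ^ 2 = (z : ℚ) ^ 2 := by
      rw [hx, hy, hz]; linear_combination D ^ 2 * h
    exact_mod_cast this
  have hval : ∀ {q : ℚ} {n : ℤ}, q ≠ 0 → (n : ℚ) = q * D →
      padicValRat 2 q = padicValInt 2 n - padicValRat 2 D := by
    intro q n hq hn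
    rw [← padicValRat.of_int, hn, padicValRat.mul hq hD]
    ring
  have hx0 : x ≠ 0 := by rintro rfl; simp [ha, hD] at hx
  have hy0 : y ≠ 0 := by rintro rfl; simp [hb, hD] at hy
  have := padicValInt_two_of_sq_add_sq hx0 hy0 hxyz
  rw [hval ha hx, hval hb hy, hval hc hz]
  omega

lemma sq_ne_sq_of_sq_add_sq {a b c : ℚ} (ha : a ≠ 0) (hb : b ≠ 0)
    (h : a ^ 2 + b ^ 2 = c ^ 2) : a ^ 2 ≠ b ^ 2 := by
  intro hab
  apply (padicValRat_two_of_sq_add_sq ha hb h).1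
  rcases sq_eq_sq_iff_eq_or_eq_neg.mp hab with rfl | rfl
  · rfl
  · exact padicValRat.neg _

lemma padicValRat_abs (p : ℕ) (q : ℚ) : padicValRat p |q| = padicValRat p q := by
  rcases abs_choice q with h | h <;> simp only [h, padicValRat.neg]

def IsRightTriangleWithArea (α : ℚ) : ℚ × ℚ × ℚ → Prop
  | (a, b, c) => 0 < a ∧ 0 < b ∧ 0 < c ∧ a ^ 2 + b ^ 2 = c ^ 2 ∧ a * b = 2 * α

/-- The triangle of the point `2P`, where `P = (c²/4, c(b² - a²)/8)` is the point of
`y² = x³ - α²x` given by a right triangle `(a, b, c)` of area `α`. -/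
def doubleTriangle : ℚ × ℚ × ℚ → ℚ × ℚ × ℚ
  | (a, b, c) => (|b ^ 2 - a ^ 2| / (2 * c), 2 * a * b * c / |b ^ 2 - a ^ 2|,
      (c ^ 4 + 4 * a ^ 2 * b ^ 2) / (2 * c * |b ^ 2 - a ^ 2|))

lemma IsRightTriangleWithArea.double {α : ℚ} {t : ℚ × ℚ × ℚ}
    (ht : IsRightTriangleWithArea α t) : IsRightTriangleWithArea α (doubleTriangle t) := by
  obtain ⟨a, b, c⟩ := t
  obtain ⟨ha, hb, hc, h, harea⟩ := ht
  have hd : b ^ 2 - a ^ 2 ≠ 0 := sub_ne_zero.mpr (sq_ne_sq_of_sq_add_sq ha.ne' hb.ne' h).symm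
  have hd' : 0 < |b ^ 2 - a ^ 2| := abs_pos.mpr hd
  refine ⟨by positivity, by positivity, by positivity, ?_, ?_⟩
  · simp only [div_pow, mul_pow, sq_abs]
    field_simp
    linear_combination
      (a ^ 2 + b ^ 2 + c ^ 2) * ((b ^ 2 - a ^ 2) ^ 2 + c ^ 4 - 4 * a ^ 2 * b ^ 2) * h
  · field_simp
    linear_combination harea

lemma padicValRat_doubleTriangle_hypotenuse {a b c : ℚ} (ha : a ≠ 0) (hb : b ≠ 0)
    (h : a ^ 2 + b ^ 2 = c ^ 2) :
    padicValRat 2 (doubleTriangle (a, b, c)).2.2 = padicValRat 2 c - 1 := by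
  obtain ⟨hne, hle⟩ := padicValRat_two_of_sq_add_sq ha hb h
  have hc : c ≠ 0 := by rintro rfl; nlinarith [sq_pos_of_ne_zero ha, sq_nonneg b]
  have hd : b ^ 2 - a ^ 2 ≠ 0 := sub_ne_zero.mpr (sq_ne_sq_of_sq_add_sq ha hb h).symm
  have hv2 : padicValRat 2 2 = 1 := padicValRat.self one_lt_two
  have hvsq : padicValRat 2 (a ^ 2) ≠ padicValRat 2 (b ^ 2) := by
    simp only [padicValRat.pow]; omega
  -- `b² - a²` and `b² + a² = c²` both have the smaller of the valuations of `a²` and `b²`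
  have hvd : padicValRat 2 (b ^ 2 - a ^ 2) = 2 * padicValRat 2 c := by
    have hsum := padicValRat.add_eq_min (p := 2) (by rw [h]; positivity) (pow_ne_zero 2 ha)
      (pow_ne_zero 2 hb) hvsq
    have hdiff := padicValRat.add_eq_min (p := 2) (q := b ^ 2) (r := -a ^ 2)
      (by rwa [← sub_eq_add_neg]) (pow_ne_zero 2 hb) (neg_ne_zero.mpr (pow_ne_zero 2 ha))
      (by rw [padicValRat.neg]; exact hvsq.symm)
    rw [h, padicValRat.pow] at hsum
    rw [← sub_eq_add_neg, padicValRat.neg] at hdiff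
    rw [hdiff, min_comm, ← hsum]
    push_cast; ring
  have hvn : padicValRat 2 (c ^ 4 + 4 * a ^ 2 * b ^ 2) = 4 * padicValRat 2 c := by
    have : padicValRat 2 (c ^ 4) < padicValRat 2 (4 * a ^ 2 * b ^ 2) := by
      rw [show (4 : ℚ) * a ^ 2 * b ^ 2 = (2 * a * b) ^ 2 by ring, padicValRat.pow,
        padicValRat.pow, padicValRat.mul (by positivity) hb, padicValRat.mul two_ne_zero ha, hv2]
      push_cast; linarith
    rw [padicValRat.add_eq_of_lt (by positivity) (by positivity) (by positivity) this,
      padicValRat.pow]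
    push_cast; ring
  simp only [doubleTriangle]
  rw [padicValRat.div (by positivity) (by positivity), padicValRat.mul (by positivity)
    (abs_ne_zero.mpr hd), padicValRat.mul two_ne_zero hc, padicValRat_abs, hvd, hvn, hv2]
  ring

namespace IsRightTriangleWithArea

variable {α : ℚ} {t : ℚ × ℚ × ℚ}

lemma iterate_doubleTriangle (ht : IsRightTriangleWithArea α t) (n : ℕ) :
    IsRightTriangleWithArea α (doubleTriangle^[n] t) := by
  induction n with
  | zero => exact ht
  | succ n ih => rw [Function.iterate_succ_apply']; exact ih.double

lemma padicValRat_iterate_doubleTriangle (ht : IsRightTriangleWithArea α t) (n : ℕ) :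
    padicValRat 2 (doubleTriangle^[n] t).2.2 = padicValRat 2 t.2.2 - n := by
  induction n with
  | zero => simp
  | succ n ih =>
    obtain ⟨ha, hb, -, h, -⟩ := ht.iterate_doubleTriangle n
    rw [Function.iterate_succ_apply', padicValRat_doubleTriangle_hypotenuse ha.ne' hb.ne' h, ih]
    push_cast; ring

lemma min_max (ht : IsRightTriangleWithArea α t) :
    IsRightTriangleWithArea α (min t.1 t.2.1, max t.1 t.2.1, t.2.2) := by
  obtain ⟨a, b, c⟩ := t
  obtain ⟨ha, hb, hc, h, harea⟩ := ht
  refine ⟨lt_min ha hb, lt_max_of_lt_left ha, hc, ?_, by rw [min_mul_max, harea]⟩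
  rcases le_total a b with hab | hab
  · simpa [hab] using h
  · simpa [hab, add_comm] using h

end IsRightTriangleWithArea

theorem congruent_infinitely_many_triangles_general (α : ℤ)
    (h : ∃ a b c : ℚ, 0 < a ∧ 0 < b ∧ 0 < c ∧ a ^ 2 + b ^ 2 = c ^ 2 ∧
      a * b = 2 * (α : ℚ)) :
    {t : ℚ × ℚ × ℚ | 0 < t.1 ∧ 0 < t.2.1 ∧ 0 < t.2.2 ∧ t.1 ≤ t.2.1 ∧
      t.1 ^ 2 + t.2.1 ^ 2 = t.2.2 ^ 2 ∧ t.1 * t.2.1 = 2 * (α : ℚ)}.Infinite := by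
  obtain ⟨a, b, c, ha, hb, hc, hpyth, harea⟩ := h
  have ht : IsRightTriangleWithArea α (a, b, c) := ⟨ha, hb, hc, hpyth, harea⟩
  let T : ℕ → ℚ × ℚ × ℚ := fun n => doubleTriangle^[n] (a, b, c)
  refine Set.infinite_of_injective_forall_mem
    (f := fun n => (min (T n).1 (T n).2.1, max (T n).1 (T n).2.1, (T n).2.2)) ?_ ?_
  · intro m n hmn
    have hv := congrArg (fun t : ℚ × ℚ × ℚ => padicValRat 2 t.2.2) hmn
    simp only [T, ht.padicValRat_iterate_doubleTriangle] at hv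
    omega
  · intro n
    obtain ⟨h₁, h₂, h₃, h₄, h₅⟩ := (ht.iterate_doubleTriangle n).min_max
    exact ⟨h₁, h₂, h₃, min_le_max, h₄, h₅⟩

/-- Corollary 8: if a squarefree positive integer `α` is congruent, then it is the area of
infinitely many (pairwise distinct) right triangles with positive rational sides.  Triangles
are normalised by `a ≤ b`, so distinct triples correspond to distinct triangles. -/
theorem congruent_infinitely_many_triangles (α : ℤ) (hsf : Squarefree α) (hpos : 0 < α)
    (h : ∃ a b c : ℚ, 0 < a ∧ 0 < b ∧ 0 < c ∧ a ^ 2 + b ^ 2 = c ^ 2 ∧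
      a * b = 2 * (α : ℚ)) :
    {t : ℚ × ℚ × ℚ | 0 < t.1 ∧ 0 < t.2.1 ∧ 0 < t.2.2 ∧ t.1 ≤ t.2.1 ∧
      t.1 ^ 2 + t.2.1 ^ 2 = t.2.2 ^ 2 ∧ t.1 * t.2.1 = 2 * (α : ℚ)}.Infinite :=
  congruent_infinitely_many_triangles_general α h
end

section
/- The only rational points (x, y) on the curve y² = x³ - x are (0,0), (1,0), and (-1,0); equivalently, the torsion statement that y = 0 for every rational solution. -/
/-!
Writing `x = p / q` in lowest terms, a rational point with `y ≠ 0` gives `p q (p² - q²) = n²`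
with `n ≠ 0`. The three factors are pairwise coprime, hence squares up to sign, which yields a
primitive solution of `a⁴ - b⁴ = c²` with `b c ≠ 0`. Fermat's descent excludes these:
`(b², c, a²)` is a primitive Pythagorean triple `(m² - n², 2mn, m² + n²)` up to order. If `b` is
odd, `m⁴ - n⁴ = (a b)²` is a smaller solution. If `b` is even, `(m, n, a)` is a primitive
Pythagorean triangle of square area `mn / 2`, and parametrising it as `(k² - l², 2kl)` turns the
area condition into `k l (k² - l²) = s²`, the equation we started from, with `|k|, |l| < |a|`.
-/

def Fermat42Sub (a b c : ℤ) : Prop :=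
  IsCoprime a b ∧ b ≠ 0 ∧ c ≠ 0 ∧ a ^ 4 - b ^ 4 = c ^ 2

theorem exists_fermat42Sub_of_mul_mul_sq_sub_sq_eq_sq {p q n : ℤ} (hpq : IsCoprime p q)
    (hn : n ≠ 0) (h : p * q * (p ^ 2 - q ^ 2) = n ^ 2) :
    ∃ a b c, Fermat42Sub a b c ∧ (a ^ 4 = p ^ 2 ∨ a ^ 4 = q ^ 2) := by
  have hp : IsCoprime p (p ^ 2 - q ^ 2) := by
    simpa [sq, sub_eq_add_neg] using (hpq.pow_right (n := 2)).neg_right.add_mul_left_right p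
  have hq : IsCoprime q (p ^ 2 - q ^ 2) := by
    simpa [sq, sub_eq_add_neg, add_comm] using
      (hpq.symm.pow_right (n := 2)).add_mul_left_right (-q)
  obtain ⟨A, hA⟩ := Int.sq_of_isCoprime (c := n) (hpq.mul_right hp) (by linear_combination h)
  obtain ⟨B, hB⟩ :=
    Int.sq_of_isCoprime (c := n) (hpq.symm.mul_right hq) (by linear_combination h)
  obtain ⟨C, hC⟩ :=
    Int.sq_of_isCoprime (c := n) (hp.symm.mul_right hq.symm) (by linear_combination h)
  have hpA : p ^ 2 = A ^ 4 := by rcases hA with rfl | rfl <;> ring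
  have hqB : q ^ 2 = B ^ 4 := by rcases hB with rfl | rfl <;> ring
  have hAB : IsCoprime A B := by
    simpa only [IsCoprime.pow_iff four_pos four_pos, hpA, hqB] using hpq.pow (m := 2) (n := 2)
  have hpqn : p * q * (p ^ 2 - q ^ 2) ≠ 0 := h ▸ pow_ne_zero 2 hn
  simp only [mul_ne_zero_iff] at hpqn
  obtain ⟨⟨hp0, hq0⟩, hpq0⟩ := hpqn
  have hA0 : A ≠ 0 := by rintro rfl; simp_all
  have hB0 : B ≠ 0 := by rintro rfl; simp_all
  have hC0 : C ≠ 0 := by rintro rfl; simp_all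
  rcases hC with hC | hC
  · exact ⟨A, B, C, ⟨hAB, hB0, hC0, by linear_combination hC - hpA + hqB⟩, .inl hpA.symm⟩
  · exact ⟨B, A, C, ⟨hAB.symm, hA0, hC0, by linear_combination -hC + hpA - hqB⟩,
      .inr hqB.symm⟩

theorem Int.natAbs_lt_natAbs_of_pow_four_lt_sq {a b : ℤ} (h : a ^ 4 < b ^ 2) :
    a.natAbs < b.natAbs :=
  Int.natAbs_lt_iff_sq_lt.mpr <| (Int.le_self_sq (a ^ 2)).trans_lt (by linarith)

theorem exists_fermat42Sub_of_sq_add_sq_of_mul_eq_two_mul_sq {m n a s : ℤ}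
    (hmn : Int.gcd m n = 1) (ha : m ^ 2 + n ^ 2 = a ^ 2) (hs : s ≠ 0)
    (harea : m * n = 2 * s ^ 2) :
    ∃ a' b' c', Fermat42Sub a' b' c' ∧ a'.natAbs < a.natAbs := by
  obtain ⟨k, l, hmn_kl, ha_kl, hkl, -⟩ :=
    PythagoreanTriple.coprime_classification.mp
      ⟨show PythagoreanTriple m n a by unfold PythagoreanTriple; linear_combination ha, hmn⟩
  have hs_kl : k * l * (k ^ 2 - l ^ 2) = s ^ 2 := by
    have : 2 * (k * l * (k ^ 2 - l ^ 2)) = 2 * s ^ 2 := by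
      rcases hmn_kl with ⟨rfl, rfl⟩ | ⟨rfl, rfl⟩ <;> linear_combination harea
    omega
  have ha2 : a ^ 2 = (k ^ 2 + l ^ 2) ^ 2 := by rcases ha_kl with h | h <;> simp only [h, neg_sq]
  have hk : k ≠ 0 := by rintro rfl; exact hs (by simpa using hs_kl.symm)
  have hl : l ≠ 0 := by rintro rfl; exact hs (by simpa using hs_kl.symm)
  obtain ⟨a', b', c', h', ha'⟩ :=
    exists_fermat42Sub_of_mul_mul_sq_sub_sq_eq_sq (Int.isCoprime_iff_gcd_eq_one.mpr hkl) hs hs_kl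
  refine ⟨a', b', c', h', Int.natAbs_lt_natAbs_of_pow_four_lt_sq ?_⟩
  have := Int.le_self_sq (k ^ 2 + l ^ 2)
  have : 0 < k ^ 2 := by positivity
  have : 0 < l ^ 2 := by positivity
  rcases ha' with h | h <;> linarith

theorem Fermat42Sub.exists_natAbs_lt {a b c : ℤ} (h : Fermat42Sub a b c) :
    ∃ a' b' c', Fermat42Sub a' b' c' ∧ a'.natAbs < a.natAbs := by
  obtain ⟨hab, hb, hc, habc⟩ := h
  have hbc : IsCoprime (b ^ 2) c := by
    have := (hab.symm.pow (m := 2) (n := 4)).add_mul_left_right (-b ^ 2)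
    rw [show a ^ 4 + b ^ 2 * -b ^ 2 = c ^ 2 by linear_combination habc] at this
    exact (IsCoprime.pow_right_iff two_pos).mp this
  obtain ⟨m, n, hbc_mn, ha_mn, hmn, -⟩ := PythagoreanTriple.coprime_classification.mp
    ⟨show PythagoreanTriple (b ^ 2) c (a ^ 2) by
        unfold PythagoreanTriple; linear_combination -habc,
      Int.isCoprime_iff_gcd_eq_one.mp hbc⟩
  have ha : a ≠ 0 := by
    rintro rfl
    have : 0 < b ^ 4 := by positivity
    nlinarith [sq_nonneg c]
  have ha2 : a ^ 2 = m ^ 2 + n ^ 2 := by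
    rcases ha_mn with h | h
    · exact h
    · nlinarith [sq_pos_of_ne_zero ha, sq_nonneg m, sq_nonneg n]
  rcases hbc_mn with ⟨hb2, rfl⟩ | ⟨hb2, rfl⟩
  · have hn : n ≠ 0 := by rintro rfl; simp at hc
    refine ⟨m, n, a * b, ⟨Int.isCoprime_iff_gcd_eq_one.mpr hmn, hn, mul_ne_zero ha hb,
      by linear_combination -a ^ 2 * hb2 - (m ^ 2 - n ^ 2) * ha2⟩, ?_⟩
    exact Int.natAbs_lt_iff_sq_lt.mpr (by nlinarith [sq_pos_of_ne_zero hn])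
  · obtain ⟨s, rfl⟩ : 2 ∣ b :=
      Int.Prime.dvd_pow' (k := 2) Nat.prime_two ⟨m * n, by linear_combination hb2⟩
    exact exists_fermat42Sub_of_sq_add_sq_of_mul_eq_two_mul_sq hmn ha2.symm
      (right_ne_zero_of_mul hb) (by linarith)

theorem not_fermat42Sub (a b c : ℤ) : ¬Fermat42Sub a b c := by
  induction hN : a.natAbs using Nat.strong_induction_on generalizing a b c with
  | _ N ih =>
    intro h
    obtain ⟨a', b', c', h', hlt⟩ := h.exists_natAbs_lt
    exact ih _ (hN ▸ hlt) a' b' c' rfl h'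

theorem exists_sq_eq_num_mul_den_mul_sq_sub_sq_of_sq_eq_cube_sub {x y : ℚ} (hy : y ≠ 0)
    (h : y ^ 2 = x ^ 3 - x) :
    ∃ n : ℤ, n ≠ 0 ∧ x.num * x.den * (x.num ^ 2 - x.den ^ 2) = n ^ 2 := by
  have hden : (x.den : ℚ) ≠ 0 := by positivity
  have hN : ((x.num * x.den * (x.num ^ 2 - x.den ^ 2) : ℤ) : ℚ) = (y * x.den ^ 2) ^ 2 := by
    rw [← Rat.num_div_den x] at h
    push_cast
    rw [mul_pow, h]
    field_simp
  obtain ⟨n, hn⟩ := Rat.isSquare_intCast_iff.mp ⟨_, hN.trans (sq _)⟩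
  refine ⟨n, ?_, hn.trans (sq n).symm⟩
  rintro rfl
  rw [mul_zero] at hn
  rw [hn, Int.cast_zero] at hN
  exact pow_ne_zero 2 (mul_ne_zero hy (pow_ne_zero 2 hden)) hN.symm

/-- The only rational points on `y² = x³ - x` are `(0,0)`, `(1,0)` and `(-1,0)`; in
particular `y = 0` for every rational solution. -/
theorem rational_points_y2_eq_x3_sub_x (x y : ℚ) (h : y ^ 2 = x ^ 3 - x) :
    y = 0 ∧ (x = 0 ∨ x = 1 ∨ x = -1) := by
  have hy : y = 0 := by
    by_contra hy
    obtain ⟨n, hn, hpq⟩ := exists_sq_eq_num_mul_den_mul_sq_sub_sq_of_sq_eq_cube_sub hy h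
    obtain ⟨a, b, c, habc, -⟩ :=
      exists_fermat42Sub_of_mul_mul_sq_sub_sq_eq_sq x.isCoprime_num_den hn hpq
    exact not_fermat42Sub a b c habc
  have hx : x * (x - 1) * (x + 1) = 0 := by linear_combination -h + y * hy
  refine ⟨hy, ?_⟩
  simpa [sub_eq_zero, add_eq_zero_iff_eq_neg, or_assoc] using hx
end

section
/- Let p be a prime with p ≡ 1 (mod 3). Then there exist integers c and d with 4p = c² + 27d², and c is unique up to sign; moreover exactly one of c, -c is ≡ -1 (mod 3). -/
/-!
A square root `y` of `-3` modulo `p` exists because `(ZMod p)ˣ` has an element `ζ` of order 3, and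
`(2ζ + 1)² = -3`. Thue's pigeonhole argument gives `u ≡ y v (mod p)` with
`|u|, |v| ≤ √p`, so `u² + 3v²` is `p`, `2p` or `3p`; `2p` is impossible modulo 4 and `3p` forces
`3 ∣ u`, so in any case `p = a² + 3b²`.
Since `p ≢ 0 (mod 3)`, one of `b`, `a - b`, `a + b` is divisible by 3, and
`4(a² + 3b²) = (2a)² + 12b² = (a ± 3b)² + 3(a ∓ b)²` gives `4p = c² + 27d²`.
For uniqueness, `(cc' + 27dd')² + 27(cd' - c'd)² = 16p²` and its twin with `d' ↦ -d'` show that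
the factor of `(cd')² - (c'd)²` divisible by `p` vanishes; then `d² = d'²` and `c² = c'²`.
Finally `c² ≡ 4p ≡ 1 (mod 3)`, so `c ≡ ±1`.
-/

theorem IsPrimitiveRoot.two_mul_add_one_sq_eq_neg_three {R : Type*} [CommRing R] [IsDomain R]
    {ζ : R} (hζ : IsPrimitiveRoot ζ 3) : (2 * ζ + 1) ^ 2 = -3 := by
  have h := hζ.geom_sum_eq_zero (by norm_num)
  simp only [Finset.sum_range_succ, Finset.sum_range_zero] at h
  linear_combination 4 * h

theorem ZMod.exists_sq_eq_neg_three {p : ℕ} [Fact p.Prime] (h3 : p % 3 = 1) :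
    ∃ y : ZMod p, y ^ 2 = -3 := by
  have h3dvd : 3 ∣ Fintype.card (ZMod p)ˣ := by
    rw [ZMod.card_units]; omega
  obtain ⟨u, hu⟩ := exists_prime_orderOf_dvd_card 3 h3dvd
  have hζ : IsPrimitiveRoot (u : ZMod p) 3 :=
    IsPrimitiveRoot.coe_units_iff.mpr (hu ▸ IsPrimitiveRoot.orderOf u)
  exact ⟨_, hζ.two_mul_add_one_sq_eq_neg_three⟩

theorem ZMod.exists_intCast_eq_mul_intCast (n : ℕ) [NeZero n] (x : ZMod n) :
    ∃ u v : ℤ, (u ≠ 0 ∨ v ≠ 0) ∧ u.natAbs ≤ n.sqrt ∧ v.natAbs ≤ n.sqrt ∧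
      (u : ZMod n) = x * v := by
  let f : Fin (n.sqrt + 1) × Fin (n.sqrt + 1) → ZMod n := fun ij => ij.1 - x * ij.2
  have hcard : Fintype.card (ZMod n) < Fintype.card (Fin (n.sqrt + 1) × Fin (n.sqrt + 1)) := by
    simpa [ZMod.card] using Nat.lt_succ_sqrt n
  obtain ⟨⟨i, j⟩, ⟨i', j'⟩, hne, hf⟩ := Fintype.exists_ne_map_eq_of_card_lt f hcard
  refine ⟨(i : ℤ) - i', (j : ℤ) - j', ?_, by omega, by omega, ?_⟩
  · by_contra! h
    exact hne (Prod.ext (Fin.ext (show (i : ℕ) = i' by omega))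
      (Fin.ext (show (j : ℕ) = j' by omega)))
  · simp only [f] at hf
    push_cast
    linear_combination hf

theorem Int.sq_add_three_mul_sq_ne_two_mul_of_odd (u v m : ℤ) (hm : Odd m) :
    u ^ 2 + 3 * v ^ 2 ≠ 2 * m := by
  obtain ⟨k, rfl⟩ := hm
  intro h
  have h4 : (4 : ZMod 4) = 0 := rfl
  have hmod : (u : ZMod 4) ^ 2 + 3 * (v : ZMod 4) ^ 2 = 2 := by
    have := congrArg (Int.cast : ℤ → ZMod 4) h
    push_cast at this
    linear_combination this + k * h4
  generalize (u : ZMod 4) = x at hmod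
  generalize (v : ZMod 4) = y at hmod
  revert x y; decide

theorem Nat.Prime.sqrt_sq_lt {p : ℕ} (hp : p.Prime) : p.sqrt ^ 2 < p :=
  (Nat.sqrt_le' p).lt_of_ne fun h => hp.not_isSquare ⟨p.sqrt, h.symm.trans (sq _)⟩

theorem Nat.Prime.exists_eq_sq_add_three_mul_sq {p : ℕ} (hp : p.Prime) (h3 : p % 3 = 1) :
    ∃ a b : ℤ, (p : ℤ) = a ^ 2 + 3 * b ^ 2 := by
  have := Fact.mk hp
  obtain ⟨y, hy⟩ := ZMod.exists_sq_eq_neg_three h3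
  obtain ⟨u, v, huv, hu, hv, hxy⟩ := ZMod.exists_intCast_eq_mul_intCast p y
  obtain ⟨k, hk⟩ : (p : ℤ) ∣ u ^ 2 + 3 * v ^ 2 := by
    rw [← ZMod.intCast_zmod_eq_zero_iff_dvd]
    push_cast
    linear_combination ((u : ZMod p) + y * v) * hxy + (v : ZMod p) ^ 2 * hy
  have hpos : 0 < u ^ 2 + 3 * v ^ 2 := by
    rcases huv with h | h <;> positivity
  have hlt : u ^ 2 + 3 * v ^ 2 < 4 * p := by
    have hs : ((p.sqrt : ℤ)) ^ 2 < p := by exact_mod_cast hp.sqrt_sq_lt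
    have hu2 : u ^ 2 ≤ (p.sqrt : ℤ) ^ 2 := Int.natAbs_le_iff_sq_le.mp (by simpa using hu)
    have hv2 : v ^ 2 ≤ (p.sqrt : ℤ) ^ 2 := Int.natAbs_le_iff_sq_le.mp (by simpa using hv)
    linarith
  have hp0 : (0 : ℤ) < p := by exact_mod_cast hp.pos
  have hk0 : 0 < k := by nlinarith
  have hk4 : k < 4 := by nlinarith
  interval_cases k
  · exact ⟨u, v, by linarith⟩
  · exact absurd (by linarith) (Int.sq_add_three_mul_sq_ne_two_mul_of_odd u v p
      (by exact_mod_cast hp.odd_of_ne_two (by omega)))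
  · obtain ⟨w, rfl⟩ : (3 : ℤ) ∣ u :=
      Int.prime_three.dvd_of_dvd_pow (n := 2) ⟨p - v ^ 2, by linarith⟩
    exact ⟨v, w, by linarith⟩

theorem Int.exists_four_mul_eq_sq_add_twentySeven_mul_sq {n a b : ℤ} (hn : n = a ^ 2 + 3 * b ^ 2)
    (ha : ¬ 3 ∣ a) : ∃ c d : ℤ, 4 * n = c ^ 2 + 27 * d ^ 2 := by
  have hcases : 3 ∣ b ∨ 3 ∣ a - b ∨ 3 ∣ a + b := by
    have : a % 3 = 1 ∨ a % 3 = 2 := by omega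
    have : b % 3 = 0 ∨ b % 3 = 1 ∨ b % 3 = 2 := by omega
    omega
  rcases hcases with ⟨d, hd⟩ | ⟨d, hd⟩ | ⟨d, hd⟩
  · exact ⟨2 * a, 2 * d, by rw [hn, hd]; ring⟩
  · exact ⟨a + 3 * b, d, by linear_combination 4 * hn + 3 * (a - b + 3 * d) * hd⟩
  · exact ⟨a - 3 * b, d, by linear_combination 4 * hn + 3 * (a + b + 3 * d) * hd⟩

theorem Int.mul_sub_mul_eq_zero_of_dvd {p m k c d c' d' : ℤ} (hk : m ^ 2 < k)
    (h : m * p = c ^ 2 + k * d ^ 2) (h' : m * p = c' ^ 2 + k * d' ^ 2)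
    (hdvd : p ∣ c * d' - c' * d) : c * d' - c' * d = 0 := by
  obtain ⟨t, ht⟩ := hdvd
  have hid : (c * c' + k * d * d') ^ 2 + k * (c * d' - c' * d) ^ 2
      = (c ^ 2 + k * d ^ 2) * (c' ^ 2 + k * d' ^ 2) := by ring
  rw [← h, ← h'] at hid
  rw [ht] at hid ⊢
  by_contra hpt
  have ht1 : 1 ≤ t ^ 2 := by
    have := Int.one_le_abs (right_ne_zero_of_mul hpt)
    nlinarith [sq_abs t]
  have hp2 : 0 < p ^ 2 := by
    have : p ≠ 0 := left_ne_zero_of_mul hpt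
    positivity
  nlinarith [sq_nonneg (c * c' + k * d * d'), sq_nonneg m]

theorem Int.sq_eq_sq_of_mul_prime_eq_sq_add_mul_sq {p m k c d c' d' : ℤ} (hp : Prime p)
    (hk : m ^ 2 < k) (h : m * p = c ^ 2 + k * d ^ 2) (h' : m * p = c' ^ 2 + k * d' ^ 2) :
    c ^ 2 = c' ^ 2 := by
  have hcross : c ^ 2 * d' ^ 2 = c' ^ 2 * d ^ 2 := by
    have hdvd : p ∣ (c * d' - c' * d) * (c * (-d') - c' * d) :=
      ⟨m * (d ^ 2 - d' ^ 2), by linear_combination d' ^ 2 * h - d ^ 2 * h'⟩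
    rcases hp.dvd_mul.mp hdvd with hminus | hplus
    · linear_combination
        (c * d' + c' * d) * Int.mul_sub_mul_eq_zero_of_dvd hk h h' hminus
    · have h'' : m * p = c' ^ 2 + k * (-d') ^ 2 := by rw [h']; ring
      linear_combination
        (c' * d - c * d') * Int.mul_sub_mul_eq_zero_of_dvd hk h h'' hplus
  have hk0 : 0 < k := lt_of_le_of_lt (sq_nonneg m) hk
  rcases mul_eq_zero.mp (by linear_combination d' ^ 2 * h - d ^ 2 * h' + hcross :
      m * p * (d' ^ 2 - d ^ 2) = 0) with hmp | hd
  · nlinarith [sq_nonneg c, sq_nonneg c', sq_nonneg d, sq_nonneg d']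
  · linear_combination h' - h + k * hd

theorem ZMod.intCast_sq_eq_one_of_four_mul_eq {n c d : ℤ} (hn : n % 3 = 1)
    (h : 4 * n = c ^ 2 + 27 * d ^ 2) : (c : ZMod 3) ^ 2 = 1 := by
  obtain ⟨q, hq⟩ : 3 ∣ n - 1 := by omega
  have h3 : (3 : ZMod 3) = 0 := rfl
  have := congrArg (Int.cast : ℤ → ZMod 3) (show c ^ 2 = 1 + 3 * (4 * q + 1 - 9 * d ^ 2) by
    linear_combination -h + 4 * hq)
  push_cast at this
  linear_combination this + (4 * (q : ZMod 3) + 1 - 9 * (d : ZMod 3) ^ 2) * h3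

/-- For a prime `p ≡ 1 (mod 3)` there are integers `c`, `d` with `4p = c² + 27d²`; `c` is
unique up to sign, and exactly one of `c`, `-c` is `≡ -1 (mod 3)`. -/
theorem four_p_eq_c2_add_27d2 (p : ℕ) (hp : p.Prime) (h3 : p % 3 = 1) :
    (∃ c d : ℤ, 4 * (p : ℤ) = c ^ 2 + 27 * d ^ 2) ∧
    (∀ c d c' d' : ℤ, 4 * (p : ℤ) = c ^ 2 + 27 * d ^ 2 →
      4 * (p : ℤ) = c' ^ 2 + 27 * d' ^ 2 → c = c' ∨ c = -c') ∧
    (∀ c d : ℤ, 4 * (p : ℤ) = c ^ 2 + 27 * d ^ 2 →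
      Xor' ((c : ZMod 3) = -1) (((-c : ℤ) : ZMod 3) = -1)) := by
  refine ⟨?_, ?_, ?_⟩
  · obtain ⟨a, b, hab⟩ := hp.exists_eq_sq_add_three_mul_sq h3
    refine Int.exists_four_mul_eq_sq_add_twentySeven_mul_sq hab fun ⟨w, hw⟩ => ?_
    have : (3 : ℤ) ∣ p := ⟨3 * w ^ 2 + b ^ 2, by rw [hab, hw]; ring⟩
    omega
  · intro c d c' d' h h'
    exact sq_eq_sq_iff_eq_or_eq_neg.mp <| Int.sq_eq_sq_of_mul_prime_eq_sq_add_mul_sq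
      (Nat.prime_iff_prime_int.mp hp) (by norm_num) h h'
  · intro c d h
    have hc := ZMod.intCast_sq_eq_one_of_four_mul_eq (by omega) h
    push_cast
    generalize (c : ZMod 3) = x at hc
    revert x
    unfold Xor'
    decide
end

section
/- The equation 2y² = 1 - 17x⁴ has no solutions in rational numbers x, y. -/
private instance fact17 : Fact (Nat.Prime 17) := ⟨by norm_num⟩

private lemma leg17_two : legendreSym 17 2 = 1 := by
  rw [legendreSym.eq_one_iff 17 (by decide)]
  exact ⟨6, by decide⟩

private lemma leg17_neg_one : legendreSym 17 (-1) = 1 := by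
  rw [legendreSym.eq_one_iff 17 (by decide)]
  exact ⟨4, by decide⟩

private lemma leg17_nat (n : ℕ) (hn : n ≠ 0)
    (h : ∀ p : ℕ, p.Prime → p ∣ n → legendreSym 17 (p : ℤ) = 1) :
    legendreSym 17 (n : ℤ) = 1 := by
  induction n using Nat.strong_induction_on with
  | _ n ih =>
    rcases eq_or_ne n 1 with rfl | h1
    · simp [legendreSym.at_one (p := 17)]
    · have hp := Nat.minFac_prime h1
      obtain ⟨m, hm⟩ := n.minFac_dvd
      have hm0 : m ≠ 0 := by rintro rfl; rw [mul_zero] at hm; exact hn hm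
      have hmlt : m < n := by
        have h1m : 1 * m < n.minFac * m :=
          Nat.mul_lt_mul_of_lt_of_le hp.one_lt le_rfl (Nat.pos_of_ne_zero hm0)
        rw [one_mul] at h1m; omega
      have hmdvd : m ∣ n := Dvd.intro_left _ hm.symm
      have hrec := ih m hmlt hm0 (fun p pp pd => h p pp (pd.trans hmdvd))
      have hmf := h n.minFac hp n.minFac_dvd
      calc legendreSym 17 (n : ℤ)
          = legendreSym 17 ((n.minFac : ℤ) * (m : ℤ)) := by rw [← Nat.cast_mul, ← hm]
        _ = 1 := by rw [legendreSym.mul, hmf, hrec, one_mul]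

private lemma reichardt_key (a b c : ℤ) (hab : IsCoprime a b) :
    b ^ 4 - 17 * a ^ 4 ≠ 2 * c ^ 2 := by
  intro h
  have p17 : Prime (17 : ℤ) := Nat.prime_iff_prime_int.mp (by norm_num)
  have n17 : ¬ IsUnit (17 : ℤ) := p17.not_unit
  -- Step 1: 17 does not divide c
  have hc17 : ¬ (17 : ℤ) ∣ c := by
    intro hc
    have hb4 : (17 : ℤ) ∣ b ^ 4 := by
      have hb4' : b ^ 4 = 17 * a ^ 4 + 2 * c ^ 2 := by linarith
      rw [hb4']
      exact dvd_add (dvd_mul_right _ _)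
        ((hc.trans (dvd_pow_self c two_ne_zero)).mul_left 2)
    have hb : (17 : ℤ) ∣ b := p17.dvd_of_dvd_pow hb4
    have ha : (17 : ℤ) ∣ a := by
      obtain ⟨k, hk⟩ := hb
      obtain ⟨l, hl⟩ := hc
      have ha4 : (17 : ℤ) ∣ a ^ 4 := by
        refine ⟨17 ^ 2 * k ^ 4 - 2 * l ^ 2, ?_⟩
        subst hk hl
        ring_nf
        ring_nf at h
        linarith
      exact p17.dvd_of_dvd_pow ha4
    exact n17 (hab.isUnit_of_dvd' ha hb)
  -- Step 2: 17 does not divide b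
  have hb17 : ¬ (17 : ℤ) ∣ b := by
    intro hb
    have h2c : (17 : ℤ) ∣ 2 * c ^ 2 := by
      rw [← h]
      exact dvd_sub (dvd_pow hb (by norm_num)) (dvd_mul_right _ _)
    have : (17 : ℤ) ∣ c ^ 2 := (p17.dvd_mul.mp h2c).resolve_left (by norm_num)
    exact hc17 (p17.dvd_of_dvd_pow this)
  -- Step 3: every prime divisor of c is a square mod 17
  have hprimes : ∀ p : ℕ, p.Prime → (p : ℤ) ∣ c → legendreSym 17 (p : ℤ) = 1 := by
    intro p pp hpc
    rcases eq_or_ne p 2 with rfl | hp2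
    · exact_mod_cast leg17_two
    · have fp : Fact p.Prime := ⟨pp⟩
      have pZ : Prime (p : ℤ) := Nat.prime_iff_prime_int.mp pp
      have hp17 : p ≠ 17 := by
        rintro rfl
        exact hc17 (by exact_mod_cast hpc)
      have hpa : ¬ (p : ℤ) ∣ a := by
        intro hpa
        have hpb4 : (p : ℤ) ∣ b ^ 4 := by
          have hb4' : b ^ 4 = 17 * a ^ 4 + 2 * c ^ 2 := by linarith
          rw [hb4']
          exact dvd_add ((hpa.trans (dvd_pow_self a (by norm_num))).mul_left 17)
            ((hpc.trans (dvd_pow_self c two_ne_zero)).mul_left 2)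
        have hpb : (p : ℤ) ∣ b := pZ.dvd_of_dvd_pow hpb4
        exact pZ.not_unit (hab.isUnit_of_dvd' hpa hpb)
      have hcast : ((b : ZMod p)) ^ 4 = 17 * (a : ZMod p) ^ 4 := by
        have hc0 : ((c : ℤ) : ZMod p) = 0 :=
          (ZMod.intCast_zmod_eq_zero_iff_dvd c p).mpr hpc
        have hmod := congrArg (fun z : ℤ => (z : ZMod p)) h
        push_cast at hmod
        rw [hc0] at hmod
        linear_combination hmod
      have ha0 : (a : ZMod p) ≠ 0 := by
        rwa [Ne, ZMod.intCast_zmod_eq_zero_iff_dvd]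
      have hsq : IsSquare ((17 : ℤ) : ZMod p) := by
        refine ⟨(b : ZMod p) ^ 2 * ((a : ZMod p) ^ 2)⁻¹, ?_⟩
        push_cast
        field_simp
        linear_combination -hcast
      have h170 : ((17 : ℤ) : ZMod p) ≠ 0 := by
        rw [Ne, ZMod.intCast_zmod_eq_zero_iff_dvd]
        intro hd
        have hd' : p ∣ 17 := by exact_mod_cast hd
        exact hp17 ((Nat.prime_dvd_prime_iff_eq pp (by norm_num)).mp hd')
      have hleg : legendreSym p 17 = 1 := (legendreSym.eq_one_iff p h170).mpr hsq
      have hrec := legendreSym.quadratic_reciprocity_one_mod_four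
        (p := 17) (q := p) (by norm_num) hp2
      rw [← hrec]
      exact_mod_cast hleg
  -- Step 4: c is a square mod 17
  have hc0 : c ≠ 0 := by rintro rfl; exact hc17 (dvd_zero _)
  have hlegc : legendreSym 17 c = 1 := by
    have hna : legendreSym 17 (c.natAbs : ℤ) = 1 := by
      refine leg17_nat c.natAbs (by simpa using hc0) ?_
      intro p pp hpd
      exact hprimes p pp ((Int.natCast_dvd_natCast.mpr hpd).trans (Int.natAbs_dvd.mpr dvd_rfl))
    rcases Int.natAbs_eq c with hc | hc
    · rw [hc]; exact hna
    · rw [hc, show -(c.natAbs : ℤ) = -1 * (c.natAbs : ℤ) by ring, legendreSym.mul,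
        leg17_neg_one, one_mul]
      exact hna
  have hcne : ((c : ℤ) : ZMod 17) ≠ 0 := by
    rwa [Ne, ZMod.intCast_zmod_eq_zero_iff_dvd]
  obtain ⟨d, hd⟩ := (legendreSym.eq_one_iff 17 hcne).mp hlegc
  -- Step 5: contradiction in ZMod 17
  have hbne : ((b : ℤ) : ZMod 17) ≠ 0 := by
    rwa [Ne, ZMod.intCast_zmod_eq_zero_iff_dvd]
  have hfin : ((b : ZMod 17)) ^ 4 = 2 * (d * d) ^ 2 := by
    have hmod := congrArg (fun z : ℤ => (z : ZMod 17)) h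
    push_cast at hmod
    rw [hd] at hmod
    have h170 : (17 : ZMod 17) = 0 := by decide
    rw [h170] at hmod
    linear_combination hmod
  have hdec : ∀ u v : ZMod 17, u ≠ 0 → u ^ 4 ≠ 2 * (v * v) ^ 2 := by decide
  exact hdec _ d hbne hfin

/-- Reichardt's example: the equation `2y² = 1 - 17x⁴` has no rational solutions. -/
theorem reichardt_no_rational_points (x y : ℚ) :
    2 * y ^ 2 ≠ 1 - 17 * x ^ 4 := by
  intro h
  have hxden : ((x.den : ℚ)) ≠ 0 := Nat.cast_ne_zero.mpr x.den_nz
  have hx : (x.num : ℚ) = x * (x.den : ℚ) := (div_eq_iff hxden).mp (Rat.num_div_den x)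
  set t : ℚ := y * (x.den : ℚ) ^ 2 with htdef
  have h4 : x ^ 4 * (x.den : ℚ) ^ 4 = (x.num : ℚ) ^ 4 := by
    rw [← mul_pow, ← hx]
  have h2 : 2 * t ^ 2 = (x.den : ℚ) ^ 4 - 17 * (x.num : ℚ) ^ 4 := by
    rw [htdef]
    linear_combination ((x.den : ℚ)) ^ 4 * h - 17 * h4
  have htden : ((t.den : ℚ)) ≠ 0 := Nat.cast_ne_zero.mpr t.den_nz
  have ht : (t.num : ℚ) = t * (t.den : ℚ) := (div_eq_iff htden).mp (Rat.num_div_den t)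
  have hq : 2 * (t.num : ℚ) ^ 2 =
      ((x.den : ℚ) ^ 4 - 17 * (x.num : ℚ) ^ 4) * (t.den : ℚ) ^ 2 := by
    linear_combination 2 * ((t.num : ℚ) + t * (t.den : ℚ)) * ht + ((t.den : ℚ)) ^ 2 * h2
  have hint : 2 * t.num ^ 2 = ((x.den : ℤ) ^ 4 - 17 * x.num ^ 4) * (t.den : ℤ) ^ 2 := by
    exact_mod_cast hq
  have hcop : IsCoprime t.num ((t.den : ℤ)) := by
    rw [Int.isCoprime_iff_gcd_eq_one]
    exact t.reduced
  have hdvd : ((t.den : ℤ)) ^ 2 ∣ 2 := by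
    have h1 : ((t.den : ℤ)) ^ 2 ∣ 2 * t.num ^ 2 :=
      ⟨(x.den : ℤ) ^ 4 - 17 * x.num ^ 4, by linarith⟩
    exact (hcop.pow (n := 2) (m := 2)).symm.dvd_of_dvd_mul_right h1
  have hden1 : ((t.den : ℤ)) = 1 := by
    have hpos : (0 : ℤ) < (t.den : ℤ) := by exact_mod_cast t.pos
    have hle := Int.le_of_dvd (by norm_num) hdvd
    nlinarith
  have hfinal : (x.den : ℤ) ^ 4 - 17 * x.num ^ 4 = 2 * t.num ^ 2 := by
    rw [hden1] at hint
    linarith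
  have hco : IsCoprime x.num ((x.den : ℤ)) := by
    rw [Int.isCoprime_iff_gcd_eq_one]
    exact x.reduced
  exact reichardt_key x.num ((x.den : ℤ)) t.num hco hfinal
end
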